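/- arXiv:1405.6114 — 7 statements merged into one kernel-verified Lean document; each statement's English description precedes it below -/
import Mathlib

section
/- For positive integers n, k, ν, m with k < n and ν < n, the following integral identity holds: ∫_{1/(ν+1)}^{1/ν} x^m (1−kx)^{n−2} dx = ∑_{μ=0}^{m} (1/k^μ) · (m!(n−2)!)/((m−μ)!(n+μ−2)!) · T_{n+μ,k,ν,m−μ}, where T_{n+μ,k,ν,m−μ} = (1/(k(n+μ−1))) · ( (ν+1−k)^{n+μ−1}/(ν+1)^{n+m−1} − (ν−k)^{n+μ−1}/ν^{n+m−1} ). -/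
/-!
Integrating by parts `m` times, each time differentiating the power of `x` and integrating the
power of `1 - kx`, expresses the integral as a sum of boundary terms
`x^(m-μ) (1 - kx)^(n+μ-1)`. At the endpoints `x = 1/ν` and `x = 1/(ν+1)` these become
`(ν - k)^(n+μ-1) / ν^(n+m-1)` and `(ν+1-k)^(n+μ-1) / (ν+1)^(n+m-1)`.
-/

open Finset

section IntegralPowMulOneSubMulPow

variable {K : ℝ}

theorem hasDerivAt_neg_one_sub_mul_pow_succ_div (hK : K ≠ 0) (p : ℕ) (x : ℝ) :
    HasDerivAt (fun y => -(1 - K * y) ^ (p + 1) / (K * (p + 1))) ((1 - K * x) ^ p) x := by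
  have hlin : HasDerivAt (fun y : ℝ => 1 - K * y) (-K) x := by
    simpa using ((hasDerivAt_id x).const_mul K).const_sub 1
  refine (((hlin.pow (p + 1)).neg).div_const (K * ((p : ℝ) + 1))).congr_deriv ?_
  rw [Nat.add_sub_cancel]
  push_cast
  field_simp

theorem integral_one_sub_mul_pow (hK : K ≠ 0) (p : ℕ) (a b : ℝ) :
    ∫ x in a..b, (1 - K * x) ^ p =
      ((1 - K * a) ^ (p + 1) - (1 - K * b) ^ (p + 1)) / (K * (p + 1)) := by
  rw [intervalIntegral.integral_eq_sub_of_hasDerivAt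
    (fun x _ => hasDerivAt_neg_one_sub_mul_pow_succ_div hK p x)
    (by apply Continuous.intervalIntegrable; fun_prop)]
  ring

theorem integral_pow_succ_mul_one_sub_mul_pow (hK : K ≠ 0) (m p : ℕ) (a b : ℝ) :
    ∫ x in a..b, x ^ (m + 1) * (1 - K * x) ^ p =
      (a ^ (m + 1) * (1 - K * a) ^ (p + 1) - b ^ (m + 1) * (1 - K * b) ^ (p + 1)) / (K * (p + 1)) +
        (m + 1) / (K * (p + 1)) * ∫ x in a..b, x ^ m * (1 - K * x) ^ (p + 1) := by
  have hparts := intervalIntegral.integral_mul_deriv_eq_deriv_mul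
    (u := fun x : ℝ => x ^ (m + 1)) (u' := fun x : ℝ => (m + 1) * x ^ m)
    (a := a) (b := b)
    (fun x _ => by simpa using hasDerivAt_pow (m + 1) x)
    (fun x _ => hasDerivAt_neg_one_sub_mul_pow_succ_div hK p x)
    (by apply Continuous.intervalIntegrable; fun_prop)
    (by apply Continuous.intervalIntegrable; fun_prop)
  rw [hparts, ← intervalIntegral.integral_const_mul]
  have hcongr : (fun x : ℝ => (m + 1) * x ^ m * (-(1 - K * x) ^ (p + 1) / (K * (p + 1)))) =
      fun x => -((m + 1) / (K * (p + 1)) * (x ^ m * (1 - K * x) ^ (p + 1))) := by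
    funext x
    ring
  rw [hcongr, intervalIntegral.integral_neg]
  ring

theorem succ_div_mul_factorial_coeff (m p μ : ℕ) :
    (m + 1) / (K * (p + 1)) *
        (1 / K ^ μ * ((m.factorial * (p + 1).factorial : ℝ) /
          ((m - μ).factorial * (p + 1 + μ).factorial))) =
      1 / K ^ (μ + 1) * (((m + 1).factorial * p.factorial : ℝ) /
        ((m + 1 - (μ + 1)).factorial * (p + (μ + 1)).factorial)) := by
  rw [Nat.add_sub_add_right, show p + (μ + 1) = p + 1 + μ by ring, Nat.factorial_succ m,
    Nat.factorial_succ p]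
  push_cast
  field_simp
  ring

theorem integral_pow_mul_one_sub_mul_pow (hK : K ≠ 0) (m p : ℕ) (a b : ℝ) :
    ∫ x in a..b, x ^ m * (1 - K * x) ^ p =
      ∑ μ ∈ range (m + 1),
        1 / K ^ μ * ((m.factorial * p.factorial : ℝ) / ((m - μ).factorial * (p + μ).factorial)) *
          (1 / (K * (p + μ + 1)) *
            (a ^ (m - μ) * (1 - K * a) ^ (p + μ + 1) - b ^ (m - μ) * (1 - K * b) ^ (p + μ + 1))) := by
  induction m generalizing p with
  | zero =>
    simp only [pow_zero, one_mul, integral_one_sub_mul_pow hK, zero_add, sum_range_one,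
      Nat.factorial_zero, Nat.cast_one, add_zero, Nat.sub_self, Nat.cast_zero]
    field_simp
  | succ m ih =>
    rw [integral_pow_succ_mul_one_sub_mul_pow hK, ih (p + 1), mul_sum, sum_range_succ' _ (m + 1),
      add_comm]
    congr 1
    · refine sum_congr rfl fun μ _ => ?_
      rw [← succ_div_mul_factorial_coeff, Nat.add_sub_add_right]
      push_cast
      ring
    · simp only [pow_zero, Nat.sub_zero, add_zero, Nat.cast_zero, div_one]
      field_simp

theorem inv_pow_mul_one_sub_mul_inv_pow {c : ℝ} (hc : c ≠ 0) {m μ : ℕ} (hμ : μ ≤ m) (q : ℕ) :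
    (1 / c) ^ (m - μ) * (1 - K * (1 / c)) ^ (μ + q) = (c - K) ^ (μ + q) / c ^ (m + q) := by
  rw [show 1 - K * (1 / c) = (c - K) / c by field_simp, div_pow, div_pow, one_pow,
    show m + q = m - μ + (μ + q) by omega]
  field_simp
  ring

end IntegralPowMulOneSubMulPow

theorem integral_x_pow_mul_one_sub_kx_pow_general
    (n k ν m : ℕ) (hk : 0 < k) (hν : 0 < ν)
    (hkn : k < n) :
    ∫ x in (1 / ((ν : ℝ) + 1))..(1 / (ν : ℝ)), x ^ m * (1 - k * x) ^ (n - 2) =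
      ∑ μ ∈ Finset.range (m + 1),
        (1 / (k : ℝ) ^ μ) *
          ((m.factorial * (n - 2).factorial : ℝ) /
            ((m - μ).factorial * (n + μ - 2).factorial)) *
          ((1 / ((k : ℝ) * ((n : ℝ) + μ - 1))) *
            (((ν : ℝ) + 1 - k) ^ (n + μ - 1) / ((ν : ℝ) + 1) ^ (n + m - 1) -
              ((ν : ℝ) - k) ^ (n + μ - 1) / (ν : ℝ) ^ (n + m - 1))) := by
  obtain ⟨p, rfl⟩ : ∃ p, n = p + 2 := ⟨n - 2, by omega⟩
  have hν₀ : (ν : ℝ) ≠ 0 := by positivity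
  rw [Nat.add_sub_cancel, integral_pow_mul_one_sub_mul_pow (by positivity) m p]
  refine sum_congr rfl fun μ hμ => ?_
  have hμm : μ ≤ m := Nat.lt_succ_iff.mp (mem_range.mp hμ)
  rw [show p + 2 + μ - 2 = p + μ by omega, show p + 2 + μ - 1 = μ + (p + 1) by omega,
    show p + 2 + m - 1 = m + (p + 1) by omega, show p + μ + 1 = μ + (p + 1) by omega,
    inv_pow_mul_one_sub_mul_inv_pow hν₀ hμm,
    inv_pow_mul_one_sub_mul_inv_pow (by positivity : (ν : ℝ) + 1 ≠ 0) hμm]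
  push_cast
  ring

/-- **Lemma 1.** For positive integers `n`, `k < n`, `ν < n` and `m`,
`∫_{1/(ν+1)}^{1/ν} x^m (1-kx)^(n-2) dx
  = ∑_{μ=0}^m (1/k^μ) (m!(n-2)!)/((m-μ)!(n+μ-2)!) T_{n+μ,k,ν,m-μ}`,
where `T_{n+μ,k,ν,m-μ} = 1/(k(n+μ-1)) ((ν+1-k)^{n+μ-1}/(ν+1)^{n+m-1}
  - (ν-k)^{n+μ-1}/ν^{n+m-1})`. -/
theorem integral_x_pow_mul_one_sub_kx_pow
    (n k ν m : ℕ) (hn : 0 < n) (hk : 0 < k) (hν : 0 < ν) (hm : 0 < m)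
    (hkn : k < n) (hνn : ν < n) :
    ∫ x in (1 / ((ν : ℝ) + 1))..(1 / (ν : ℝ)), x ^ m * (1 - k * x) ^ (n - 2) =
      ∑ μ ∈ Finset.range (m + 1),
        (1 / (k : ℝ) ^ μ) *
          ((m.factorial * (n - 2).factorial : ℝ) /
            ((m - μ).factorial * (n + μ - 2).factorial)) *
          ((1 / ((k : ℝ) * ((n : ℝ) + μ - 1))) *
            (((ν : ℝ) + 1 - k) ^ (n + μ - 1) / ((ν : ℝ) + 1) ^ (n + m - 1) -
              ((ν : ℝ) - k) ^ (n + μ - 1) / (ν : ℝ) ^ (n + m - 1))) :=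
  integral_x_pow_mul_one_sub_kx_pow_general n k ν m hk hν hkn
end

section
/- For every positive integer n, ∑_{k=1}^{n} C(n,k) (−1)^{k+1} · k/(n+1−k) = (−1)^{n+1}, where C(n,k) denotes the binomial coefficient. -/
/-!
Since `C(n,k) · k = C(n,k-1) · (n+1-k)`, the `k`-th term equals `(-1)^(k+1) C(n,k-1)`, and the sum
becomes the alternating partial sum `∑_{j<n} (-1)^j C(n,j)`, which is `(-1)^(n-1)` for `n ≥ 1`.
-/

open Finset

theorem Finset.sum_Icc_one_eq_sum_range {M : Type*} [AddCommMonoid M] (f : ℕ → M) (n : ℕ) :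
    ∑ k ∈ Icc 1 n, f k = ∑ j ∈ range n, f (j + 1) := by
  rw [range_eq_Ico, sum_Ico_add' f 0 n 1, zero_add, Ico_add_one_right_eq_Icc]

theorem Nat.cast_choose_succ_mul_div_sub {K : Type*} [Field K] [CharZero K] {n k : ℕ}
    (hk : k < n) : (n.choose (k + 1) : K) * (k + 1) / (n - k) = n.choose k := by
  have hsub : (n : K) - k ≠ 0 := sub_ne_zero.mpr (by exact_mod_cast hk.ne')
  rw [div_eq_iff hsub]
  have h := congrArg (Nat.cast : ℕ → K) (Nat.choose_succ_right_eq n k)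
  push_cast [Nat.cast_sub hk.le] at h
  exact h

/-- **Binomial identity (3.1).** For every positive integer `n`,
`∑_{k=1}^n C(n,k) (-1)^{k+1} k/(n+1-k) = (-1)^{n+1}`. -/
theorem sum_choose_mul_div_eq_neg_one_pow (n : ℕ) (hn : 0 < n) :
    ∑ k ∈ Finset.Icc 1 n,
        (n.choose k : ℝ) * (-1) ^ (k + 1) * k / ((n : ℝ) + 1 - k) =
      (-1) ^ (n + 1) := by
  obtain ⟨m, rfl⟩ := Nat.exists_eq_add_one_of_ne_zero hn.ne'
  have hterm : ∀ j ∈ range (m + 1),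
      ((m + 1).choose (j + 1) : ℝ) * (-1) ^ (j + 1 + 1) * ↑(j + 1) / (↑(m + 1) + 1 - ↑(j + 1)) =
        (-1) ^ j * (m + 1).choose j := by
    intro j hj
    rw [← Nat.cast_choose_succ_mul_div_sub (K := ℝ) (mem_range.mp hj)]
    push_cast
    ring
  have halternating : ∑ j ∈ range (m + 1), ((-1) ^ j * (m + 1).choose j : ℝ) = (-1) ^ m := by
    have h := Int.alternating_sum_range_choose_eq_choose (n := m) (m := m)
    rw [Nat.choose_self, Nat.cast_one, mul_one] at h
    exact_mod_cast h
  rw [sum_Icc_one_eq_sum_range, sum_congr rfl hterm, halternating]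
  ring
end

section
/- For positive integers n, m and s with 1 ≤ s ≤ m, one has ∑_{μ=s}^{m} (−1)^μ/((m−μ)!(n+μ−1)!) · C(n+μ−1, μ−s) = δ_{s,m} · (−1)^m/(n+m−1)!, where δ_{s,m} is the Kronecker delta (equal to 1 if s = m and 0 otherwise). -/
open Finset

lemma alt_real' (M : ℕ) :
    ∑ k ∈ range (M + 1), (-1 : ℝ) ^ k * (M.choose k : ℝ) =
      if M = 0 then 1 else 0 := by
  have h := Int.alternating_sum_range_choose (n := M)
  have h2 := congrArg (fun z : ℤ => (z : ℝ)) h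
  push_cast at h2
  simpa using h2

lemma alt_div' (M : ℕ) :
    ∑ k ∈ range (M + 1), (-1 : ℝ) ^ k / ((M - k).factorial * k.factorial) =
      (if M = 0 then 1 else 0) / (M.factorial : ℝ) := by
  rw [← alt_real' M, Finset.sum_div]
  refine Finset.sum_congr rfl fun k hk => ?_
  have hkM : k ≤ M := by simpa [Nat.lt_succ_iff] using Finset.mem_range.mp hk
  have hc : (M.choose k : ℝ) = M.factorial / (k.factorial * (M - k).factorial) :=
    Nat.cast_choose ℝ hkM
  have h1 : ((M - k).factorial : ℝ) ≠ 0 := Nat.cast_ne_zero.mpr (Nat.factorial_ne_zero _)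
  have h2 : (k.factorial : ℝ) ≠ 0 := Nat.cast_ne_zero.mpr (Nat.factorial_ne_zero _)
  have h3 : (M.factorial : ℝ) ≠ 0 := Nat.cast_ne_zero.mpr (Nat.factorial_ne_zero _)
  rw [hc]
  field_simp

/-- **Binomial identity (3.3).** For positive integers `n`, `m` and `s` with
`1 ≤ s ≤ m`,
`∑_{μ=s}^m (-1)^μ/((m-μ)!(n+μ-1)!) C(n+μ-1, μ-s) = δ_{s,m} (-1)^m/(n+m-1)!`. -/
theorem sum_neg_one_pow_div_factorial_mul_choose
    (n m s : ℕ) (hn : 0 < n) (hm : 0 < m) (hs : 1 ≤ s) (hsm : s ≤ m) :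
    ∑ μ ∈ Finset.Icc s m,
        (-1 : ℝ) ^ μ / ((m - μ).factorial * (n + μ - 1).factorial) *
          ((n + μ - 1).choose (μ - s) : ℝ) =
      (if s = m then 1 else 0) * (-1) ^ m / ((n + m - 1).factorial : ℝ) := by
  set M := m - s with hMdef
  set A := n + s - 1 with hAdef
  have hA : (A.factorial : ℝ) ≠ 0 := Nat.cast_ne_zero.mpr (Nat.factorial_ne_zero _)
  rw [← Finset.Ico_add_one_right_eq_Icc, Finset.sum_Ico_eq_sum_range]
  have hM1 : m + 1 - s = M + 1 := by omega
  rw [hM1]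
  have key : ∀ k ∈ range (M + 1),
      (-1 : ℝ) ^ (s + k) / ((m - (s + k)).factorial * (n + (s + k) - 1).factorial) *
        ((n + (s + k) - 1).choose ((s + k) - s) : ℝ)
      = (-1 : ℝ) ^ s / (A.factorial : ℝ) *
        ((-1 : ℝ) ^ k / ((M - k).factorial * k.factorial)) := by
    intro k hk
    have e1 : m - (s + k) = M - k := by omega
    have e2 : n + (s + k) - 1 = A + k := by omega
    have e3 : (s + k) - s = k := by omega
    rw [e1, e2, e3, Nat.cast_choose ℝ (Nat.le_add_left k A)]
    have h1 : ((M - k).factorial : ℝ) ≠ 0 := Nat.cast_ne_zero.mpr (Nat.factorial_ne_zero _)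
    have h2 : (k.factorial : ℝ) ≠ 0 := Nat.cast_ne_zero.mpr (Nat.factorial_ne_zero _)
    have h4 : ((A + k).factorial : ℝ) ≠ 0 := Nat.cast_ne_zero.mpr (Nat.factorial_ne_zero _)
    have e4 : A + k - k = A := by omega
    rw [e4, pow_add]
    field_simp
  rw [Finset.sum_congr rfl key, ← Finset.mul_sum, alt_div' M]
  by_cases hsm' : s = m
  · subst hsm'
    have : M = 0 := by omega
    simp [this, hAdef]
  · have hM0 : M ≠ 0 := by omega
    simp [hM0, hsm']
end

section
/- Let m be a positive integer and x_1, …, x_m real numbers. Then the sum over all m-tuples of nonnegative integers (r_1,…,r_m) with r_1 + 2r_2 + … + m·r_m = m of m!/(r_1!·1^{r_1} · r_2!·2^{r_2} ⋯ r_m!·m^{r_m}) · x_1^{r_1} x_2^{r_2} ⋯ x_m^{r_m} equals m! times the coefficient of y^m in the formal power series exp( ∑_{r=1}^{m} (x_r/r) y^r ). -/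
/-! By the multinomial theorem, the coefficient of `y^m` in `(∑ᵢ aᵢ y^(i+1))^j` is the sum of
`multinomial k * ∏ aᵢ^kᵢ` over the tuples `k` of size `∑ kᵢ = j` and weight `∑ (i+1) kᵢ = m`,
and dividing by `j!` turns `multinomial k` into `1 / ∏ kᵢ!`. Summing over `j ≤ m` collects
every tuple of weight `m`, grouped by its size. -/

open Finset PowerSeries

/-- The finite set of `m`-tuples `(r 0, …, r (m-1))` of nonnegative integers
(thought of as `(r_1, …, r_m)`) satisfying `r_1 + 2 r_2 + ⋯ + m r_m = m`.
Any such tuple has all entries `≤ m`, so restricting each entry to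
`Finset.range (m+1)` loses nothing. -/
def partitionTuples (m : ℕ) : Finset (Fin m → ℕ) :=
  (Fintype.piFinset fun _ : Fin m => Finset.range (m + 1)).filter
    fun r => ∑ i : Fin m, ((i : ℕ) + 1) * r i = m

/-- The formal exponential `exp f = ∑_{j≥0} f^j / j!` of a power series `f`
with zero constant term: since `f` has zero constant coefficient, the
coefficient of `y^m` in `∑_{j≥0} f^j / j!` only receives contributions from
`j ≤ m`. -/
noncomputable def expPS (f : PowerSeries ℝ) : PowerSeries ℝ :=
  PowerSeries.mk fun m =>
    ∑ j ∈ Finset.range (m + 1), PowerSeries.coeff (R := ℝ) m (f ^ j) / j.factorial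

theorem PowerSeries.coeff_sum_C_mul_X_pow_pow {R ι : Type*} [CommSemiring R] [DecidableEq ι]
    (s : Finset ι) (a : ι → R) (w : ι → ℕ) (n j : ℕ) :
    coeff n ((∑ i ∈ s, C (a i) * X ^ w i) ^ j) =
      ∑ k ∈ piAntidiag s j with ∑ i ∈ s, w i * k i = n,
        (Nat.multinomial s k : R) * ∏ i ∈ s, a i ^ k i := by
  have monomial_pow (i : ι) (e : ℕ) :
      (C (a i) * X ^ w i) ^ e = C (a i ^ e) * X ^ (w i * e) := by
    rw [mul_pow, ← map_pow, ← pow_mul]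
  simp_rw [sum_pow_eq_sum_piAntidiag, map_sum, monomial_pow, prod_mul_distrib, ← map_prod,
    prod_pow_eq_pow_sum, ← map_natCast (C (R := R)), coeff_C_mul, coeff_X_pow, sum_filter]
  refine sum_congr rfl fun k _ => ?_
  by_cases h : ∑ i ∈ s, w i * k i = n <;> simp [h, Ne.symm]

theorem Nat.cast_multinomial_div_factorial {K ι : Type*} [Field K] [CharZero K]
    (s : Finset ι) (k : ι → ℕ) :
    (Nat.multinomial s k : K) / (∑ i ∈ s, k i).factorial = (∏ i ∈ s, ((k i).factorial : K))⁻¹ := by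
  rw [← Nat.multinomial_spec s k]
  push_cast
  have hprod : ∏ i ∈ s, ((k i).factorial : K) ≠ 0 :=
    prod_ne_zero_iff.2 fun i _ => Nat.cast_ne_zero.2 (Nat.factorial_ne_zero _)
  have hmult : (Nat.multinomial s k : K) ≠ 0 := by exact_mod_cast (Nat.multinomial_pos s k).ne'
  field_simp

theorem mem_partitionTuples {m : ℕ} {r : Fin m → ℕ} :
    r ∈ partitionTuples m ↔ ∑ i : Fin m, ((i : ℕ) + 1) * r i = m := by
  refine ⟨fun h => (mem_filter.1 h).2, fun h => mem_filter.2 ⟨?_, h⟩⟩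
  refine Fintype.mem_piFinset.2 fun i => mem_range_succ_iff.2 ?_
  calc r i ≤ ((i : ℕ) + 1) * r i := Nat.le_mul_of_pos_left _ i.succ_pos
    _ ≤ ∑ i : Fin m, ((i : ℕ) + 1) * r i :=
      single_le_sum (f := fun i : Fin m => ((i : ℕ) + 1) * r i) (by simp) (mem_univ i)
    _ = m := h

theorem sum_le_of_mem_partitionTuples {m : ℕ} {r : Fin m → ℕ} (hr : r ∈ partitionTuples m) :
    ∑ i, r i ≤ m :=
  calc ∑ i, r i ≤ ∑ i : Fin m, ((i : ℕ) + 1) * r i :=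
        sum_le_sum fun i _ => Nat.le_mul_of_pos_left _ i.succ_pos
    _ = m := mem_partitionTuples.1 hr

theorem filter_partitionTuples_sum_eq (m j : ℕ) :
    {r ∈ partitionTuples m | ∑ i : Fin m, r i = j} =
      {k ∈ piAntidiag (univ : Finset (Fin m)) j | ∑ i : Fin m, ((i : ℕ) + 1) * k i = m} := by
  ext r
  simp [mem_partitionTuples, and_comm]

theorem coeff_expPS_sum_C_mul_X_pow (m : ℕ) (a : Fin m → ℝ) :
    coeff m (expPS (∑ i : Fin m, C (a i) * X ^ ((i : ℕ) + 1))) =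
      ∑ r ∈ partitionTuples m, ∏ i, a i ^ r i / (r i).factorial := by
  rw [expPS, coeff_mk, ← sum_fiberwise_of_maps_to
    (g := fun r : Fin m → ℕ => ∑ i, r i) (t := range (m + 1))
    fun r hr => mem_range_succ_iff.2 (sum_le_of_mem_partitionTuples hr)]
  refine sum_congr rfl fun j _ => ?_
  rw [coeff_sum_C_mul_X_pow_pow, filter_partitionTuples_sum_eq, sum_div]
  refine sum_congr rfl fun k hk => ?_
  rw [← (mem_piAntidiag.1 (mem_filter.1 hk).1).1, mul_div_right_comm,
    Nat.cast_multinomial_div_factorial, prod_div_distrib, div_eq_inv_mul]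

theorem partition_sum_eq_factorial_mul_coeff_exp_general (m : ℕ)
    (x : Fin m → ℝ) :
    ∑ r ∈ partitionTuples m,
        ((m.factorial : ℝ) /
            ∏ i : Fin m, (((r i).factorial : ℝ) * ((i : ℕ) + 1) ^ (r i))) *
          ∏ i : Fin m, (x i) ^ (r i) =
      (m.factorial : ℝ) *
        PowerSeries.coeff (R := ℝ) m
          (expPS (∑ i : Fin m,
            PowerSeries.C (R := ℝ) (x i / ((i : ℕ) + 1)) * PowerSeries.X ^ ((i : ℕ) + 1))) := by
  rw [coeff_expPS_sum_C_mul_X_pow, mul_sum]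
  refine sum_congr rfl fun r _ => ?_
  simp only [div_pow, div_div, prod_div_distrib, prod_mul_distrib]
  ring

/-- **Lemma 4 (first claim).** For a positive integer `m` and reals
`x_1, …, x_m` (here `x i = x_{i+1}` for `i : Fin m`),
`∑_{r_1+2r_2+⋯+m r_m = m} m!/(r_1! 1^{r_1} ⋯ r_m! m^{r_m}) x_1^{r_1} ⋯ x_m^{r_m}`
equals `m!` times the coefficient of `y^m` in `exp (∑_{r=1}^m (x_r/r) y^r)`. -/
theorem partition_sum_eq_factorial_mul_coeff_exp (m : ℕ) (hm : 0 < m)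
    (x : Fin m → ℝ) :
    ∑ r ∈ partitionTuples m,
        ((m.factorial : ℝ) /
            ∏ i : Fin m, (((r i).factorial : ℝ) * ((i : ℕ) + 1) ^ (r i))) *
          ∏ i : Fin m, (x i) ^ (r i) =
      (m.factorial : ℝ) *
        PowerSeries.coeff (R := ℝ) m
          (expPS (∑ i : Fin m,
            PowerSeries.C (R := ℝ) (x i / ((i : ℕ) + 1)) * PowerSeries.X ^ ((i : ℕ) + 1))) :=
  partition_sum_eq_factorial_mul_coeff_exp_general m x
end

section
/- For all positive integers n and s, ∑_{k=1}^{n} k^{−s} C(n,k) (−1)^{k+1} = 𝓗_{n,s}, where 𝓗_{n,s} is the sum over all s-tuples of nonnegative integers (r_1,…,r_s) with r_1 + 2r_2 + … + s·r_s = s of ∏_{i=1}^{s} H_{n,i}^{r_i}/(r_i! · i^{r_i}). -/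
open Finset

/-- `H n r = ∑_{j=1}^n 1/j^r`, the `n`-th harmonic number of order `r`. -/
noncomputable def harmonicOrder (n r : ℕ) : ℝ :=
  ∑ j ∈ Finset.Icc 1 n, 1 / (j : ℝ) ^ r

/-- `𝓗_{n,s} = ∑_{r_1+2r_2+⋯+s r_s = s} ∏_{i=1}^s H_{n,i}^{r_i}/(r_i! i^{r_i})`,
the sum ranging over all `s`-tuples of nonnegative integers; any such tuple has
entries `≤ s`, so restricting each entry to `Finset.range (s+1)` loses
nothing. -/
noncomputable def calH (n s : ℕ) : ℝ :=
  ∑ r ∈ (Fintype.piFinset fun _ : Fin s => Finset.range (s + 1)).filter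
      (fun r => ∑ i : Fin s, ((i : ℕ) + 1) * r i = s),
    ∏ i : Fin s,
      harmonicOrder n ((i : ℕ) + 1) ^ (r i) /
        (((r i).factorial : ℝ) * ((i : ℕ) + 1) ^ (r i))

/-! ### Auxiliary: complete homogeneous sums defined by recursion -/

noncomputable def hfun : ℕ → ℕ → ℝ
  | _, 0 => 1
  | 0, _+1 => 0
  | n+1, s+1 => hfun n (s+1) + hfun (n+1) s / (n+1)
  termination_by n s => (n, s)

lemma hfun_zero (n : ℕ) : hfun n 0 = 1 := by cases n <;> simp [hfun]
lemma hfun_zero_left (s : ℕ) : hfun 0 (s+1) = 0 := by simp [hfun]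
lemma hfun_rec (n s : ℕ) : hfun (n+1) (s+1) = hfun n (s+1) + hfun (n+1) s / (n+1) := by
  rw [hfun]

/-! ### The alternating binomial sum -/

noncomputable def Afun (n s : ℕ) : ℝ :=
  ∑ k ∈ Finset.Icc 1 n, (1 / (k : ℝ) ^ s) * (n.choose k : ℝ) * (-1) ^ (k + 1)

lemma Afun_zero_left (s : ℕ) : Afun 0 s = 0 := by simp [Afun]

lemma Afun_s_zero (n : ℕ) (hn : 0 < n) : Afun n 0 = 1 := by
  have h := Int.alternating_sum_range_choose (n := n)
  rw [if_neg hn.ne'] at h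
  have h' : ((∑ i ∈ range (n + 1), (-1 : ℤ) ^ i * n.choose i : ℤ) : ℝ) = 0 := by
    rw [h]; norm_num
  push_cast at h'
  have hicc : Finset.Icc 1 n = Finset.range (n+1) \ {0} := by
    ext k; simp [Nat.lt_succ_iff, Nat.one_le_iff_ne_zero]; omega
  have : Afun n 0 = ∑ k ∈ range (n+1) \ {0}, (-1:ℝ)^(k+1) * n.choose k := by
    rw [Afun, hicc]; apply Finset.sum_congr rfl; intro k _; ring
  rw [this, Finset.sum_sdiff_eq_sub (by simp)]
  simp only [pow_succ]
  have : ∑ k ∈ range (n+1), (-1:ℝ)^k * (-1) * n.choose k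
      = -∑ i ∈ range (n + 1), (-1:ℝ) ^ i * n.choose i := by
    rw [← Finset.sum_neg_distrib]; apply Finset.sum_congr rfl; intro k _; ring
  rw [this, h']
  norm_num

lemma Afun_rec (n s : ℕ) : Afun (n+1) (s+1) = Afun n (s+1) + Afun (n+1) s / (n+1) := by
  have hA : Afun n (s+1) = ∑ k ∈ Finset.Icc 1 (n+1),
      (1 / (k : ℝ) ^ (s+1)) * (n.choose k : ℝ) * (-1) ^ (k + 1) := by
    rw [Afun, Finset.sum_Icc_succ_top (by omega)]
    simp [Nat.choose_succ_self]
  have hdiv : Afun (n+1) s / (n+1) = ∑ k ∈ Finset.Icc 1 (n+1),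
      (1 / (((n:ℝ)+1) * (k : ℝ) ^ s)) * ((n+1).choose k : ℝ) * (-1) ^ (k + 1) := by
    rw [Afun, Finset.sum_div]
    apply Finset.sum_congr rfl; intro k _
    rw [one_div, one_div, mul_inv]
    ring
  rw [hA, hdiv, Afun, ← Finset.sum_add_distrib]
  apply Finset.sum_congr rfl
  intro k hk
  simp only [Finset.mem_Icc] at hk
  obtain ⟨k, rfl⟩ : ∃ k', k = k' + 1 := ⟨k - 1, by omega⟩
  have hpascal : ((n+1).choose (k+1) : ℝ) = n.choose (k+1) + n.choose k := by
    rw [Nat.choose_succ_succ']; push_cast; ring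
  have hkey : (n+1) * n.choose k = (n+1).choose (k+1) * (k+1) := Nat.add_one_mul_choose_eq n k
  have hkeyR : ((n:ℝ)+1) * (n.choose k : ℝ) = ((n+1).choose (k+1) : ℝ) * ((k:ℝ)+1) := by
    exact_mod_cast congrArg (Nat.cast : ℕ → ℝ) hkey
  have e1 : (1 / ((k:ℝ)+1) ^ (s+1)) * (((n+1).choose (k+1) : ℝ))
      = (1/((k:ℝ)+1)^(s+1)) * ((n.choose (k+1) : ℝ)) + (1/((k:ℝ)+1)^(s+1)) * ((n.choose k : ℝ)) := by
    rw [hpascal]; ring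
  have e2 : (1/((k:ℝ)+1)^(s+1)) * ((n.choose k : ℝ))
      = 1/((((n:ℝ))+1)*(((k:ℝ))+1)^s) * (((n+1).choose (k+1) : ℝ)) := by
    rw [div_mul_eq_mul_div, div_mul_eq_mul_div, div_eq_div_iff (by positivity) (by positivity),
      pow_succ]
    linear_combination ((k:ℝ)+1)^s * hkeyR
  push_cast
  linear_combination ((-1:ℝ)^(k+1+1)) * e1 + ((-1:ℝ)^(k+1+1)) * e2

lemma Afun_eq_hfun (n s : ℕ) (hn : 0 < n) : Afun n s = hfun n s := by
  induction s generalizing n with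
  | zero => rw [Afun_s_zero n hn, hfun_zero]
  | succ s ihs =>
    obtain ⟨n, rfl⟩ : ∃ n', n = n' + 1 := ⟨n - 1, by omega⟩
    clear hn
    induction n with
    | zero => rw [Afun_rec, Afun_zero_left, hfun_rec, hfun_zero_left, ihs 1 one_pos]
    | succ n ihn =>
      rw [Afun_rec, hfun_rec, ihn, ihs _ (by omega)]

/-! ### Newton-type recurrence for `hfun` -/

lemma harmonicOrder_zero_left (r : ℕ) : harmonicOrder 0 r = 0 := by simp [harmonicOrder]

lemma harmonicOrder_succ (n r : ℕ) :
    harmonicOrder (n+1) r = harmonicOrder n r + (1/((n:ℝ)+1))^r := by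
  rw [harmonicOrder, harmonicOrder, Finset.sum_Icc_succ_top (by omega)]
  push_cast
  rw [div_pow, one_pow]

lemma hfun_conv (n m : ℕ) :
    hfun (n+1) m = ∑ t ∈ range (m+1), (1/((n:ℝ)+1))^t * hfun n (m-t) := by
  induction m with
  | zero => simp [hfun_zero]
  | succ m ih =>
    rw [hfun_rec, Finset.sum_range_succ', ih, Finset.sum_div]
    simp only [pow_zero, one_mul, Nat.sub_zero, Nat.succ_sub_succ_eq_sub]
    rw [add_comm]
    congr 1
    apply Finset.sum_congr rfl
    intro t _
    rw [pow_succ]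
    ring

lemma sum_sum_range_sub {M : Type*} [AddCommMonoid M] (N : ℕ) (f : ℕ → ℕ → M) :
    ∑ t ∈ range N, ∑ j ∈ range (N - t), f t j
      = ∑ j ∈ range N, ∑ t ∈ range (N - j), f t j := by
  apply Finset.sum_comm'
  intro t j
  simp only [mem_range]
  omega

lemma sum_Ico_count (N : ℕ) (F : ℕ → ℝ) :
    ∑ j ∈ range N, ∑ u ∈ Ico (j+1) (N+1), F u = ∑ u ∈ range (N+1), (u:ℝ) * F u := by
  rw [Finset.sum_comm' (t' := range (N+1)) (s' := fun u => range u)]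
  · apply Finset.sum_congr rfl
    intro u _
    rw [Finset.sum_const, Finset.card_range, nsmul_eq_mul]
  · intro j u
    simp only [mem_range, mem_Ico]
    omega

lemma hfun_newton (n s : ℕ) :
    (s:ℝ) * hfun n s = ∑ j ∈ range s, harmonicOrder n (j+1) * hfun n (s-(j+1)) := by
  induction n generalizing s with
  | zero =>
    cases s with
    | zero => simp
    | succ s => simp [hfun_zero_left, harmonicOrder_zero_left]
  | succ n ih =>
    set q : ℝ := 1/((n:ℝ)+1) with hq
    have key1 : ∑ t ∈ range (s+1), q^t * (((s-t:ℕ)):ℝ) * hfun n (s-t)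
        = ∑ j ∈ range s, harmonicOrder n (j+1) * hfun (n+1) (s-(j+1)) := by
      have e1 : ∀ t ∈ range (s+1), q^t * (((s-t:ℕ)):ℝ) * hfun n (s-t)
          = ∑ j ∈ range (s-t), q^t * (harmonicOrder n (j+1) * hfun n (s-t-(j+1))) := by
        intro t _
        rw [mul_assoc, ih (s-t), Finset.mul_sum]
      rw [Finset.sum_congr rfl e1, Finset.sum_range_succ]
      simp only [Nat.sub_self, Finset.range_zero, Finset.sum_empty, add_zero]
      rw [sum_sum_range_sub]
      apply Finset.sum_congr rfl
      intro j hj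
      simp only [mem_range] at hj
      have hconv := hfun_conv n (s-(j+1))
      have hrange : s - (j+1) + 1 = s - j := by omega
      rw [hrange] at hconv
      rw [hconv, Finset.mul_sum]
      apply Finset.sum_congr rfl
      intro t ht
      simp only [mem_range] at ht
      have : s - t - (j+1) = s - (j+1) - t := by omega
      rw [this]
      ring
    have key2 : ∑ t ∈ range (s+1), (t:ℝ) * (q^t * hfun n (s-t))
        = ∑ j ∈ range s, q^(j+1) * hfun (n+1) (s-(j+1)) := by
      rw [← sum_Ico_count s (fun u => q^u * hfun n (s-u))]
      apply Finset.sum_congr rfl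
      intro j hj
      simp only [mem_range] at hj
      rw [Finset.sum_Ico_eq_sum_range]
      have hub : s + 1 - (j+1) = s - j := by omega
      rw [hub]
      have hconv := hfun_conv n (s-(j+1))
      have hrange : s - (j+1) + 1 = s - j := by omega
      rw [hrange] at hconv
      rw [hconv, Finset.mul_sum]
      apply Finset.sum_congr rfl
      intro t ht
      simp only [mem_range] at ht
      have : s - (j + 1 + t) = s - (j+1) - t := by omega
      rw [this, pow_add]
      ring
    calc (s:ℝ) * hfun (n+1) s
        = ∑ t ∈ range (s+1), (s:ℝ) * (q^t * hfun n (s-t)) := by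
          rw [hfun_conv, Finset.mul_sum]
      _ = ∑ t ∈ range (s+1), (q^t * (((s-t:ℕ)):ℝ) * hfun n (s-t)
            + (t:ℝ) * (q^t * hfun n (s-t))) := by
          apply Finset.sum_congr rfl
          intro t ht
          simp only [mem_range] at ht
          have : (s:ℝ) = ((s-t:ℕ):ℝ) + (t:ℝ) := by
            have h' : s - t + t = s := by omega
            exact_mod_cast (congrArg (Nat.cast : ℕ → ℝ) h'.symm)
          rw [this]
          ring
      _ = ∑ j ∈ range s, harmonicOrder n (j+1) * hfun (n+1) (s-(j+1))
            + ∑ j ∈ range s, q^(j+1) * hfun (n+1) (s-(j+1)) := by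
          rw [Finset.sum_add_distrib, key1, key2]
      _ = ∑ j ∈ range s, harmonicOrder (n+1) (j+1) * hfun (n+1) (s-(j+1)) := by
          rw [← Finset.sum_add_distrib]
          apply Finset.sum_congr rfl
          intro j _
          rw [harmonicOrder_succ]
          ring

/-! ### Newton-type recurrence for the partition sums -/

/-- The sum of the partition weights over all `Fin s`-tuples of total weight `m`. -/
noncomputable def Sfun (n s m : ℕ) : ℝ :=
  ∑ r ∈ (Fintype.piFinset fun _ : Fin s => Finset.range (s + 1)).filter
      (fun r => ∑ i : Fin s, ((i : ℕ) + 1) * r i = m),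
    ∏ i : Fin s,
      harmonicOrder n ((i : ℕ) + 1) ^ (r i) /
        (((r i).factorial : ℝ) * ((i : ℕ) + 1) ^ (r i))

lemma weight_bound {s m : ℕ} {r : Fin s → ℕ} (h : ∑ i : Fin s, ((i:ℕ)+1) * r i = m)
    (i : Fin s) : ((i:ℕ)+1) * r i ≤ m :=
  h ▸ Finset.single_le_sum (f := fun k : Fin s => ((k:ℕ)+1) * r k) (fun k _ => Nat.zero_le _) (mem_univ i)

lemma weight_update {s : ℕ} (r : Fin s → ℕ) (i : Fin s) (c : ℕ) :
    ∑ k : Fin s, ((k:ℕ)+1) * (Function.update r i c) k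
      = (∑ k : Fin s, ((k:ℕ)+1) * r k) - ((i:ℕ)+1)*(r i) + ((i:ℕ)+1)*c := by
  have h1 : ∑ k : Fin s, ((k:ℕ)+1) * (Function.update r i c) k
      = ∑ k ∈ univ \ {i}, ((k:ℕ)+1) * r k + ((i:ℕ)+1)*c := by
    rw [Finset.sum_eq_sum_sdiff_singleton_add (mem_univ i)]
    congr 1
    · apply Finset.sum_congr rfl
      intro k hk
      simp only [mem_sdiff, mem_singleton] at hk
      rw [Function.update_of_ne hk.2]
    · rw [Function.update_self]
  have h2 : ∑ k : Fin s, ((k:ℕ)+1) * r k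
      = ∑ k ∈ univ \ {i}, ((k:ℕ)+1) * r k + ((i:ℕ)+1)*(r i) :=
    Finset.sum_eq_sum_sdiff_singleton_add (mem_univ i) _
  omega

lemma prod_update {s : ℕ} (F : Fin s → ℕ → ℝ) (r : Fin s → ℕ) (i : Fin s) (c : ℕ) :
    ∏ k : Fin s, F k ((Function.update r i c) k)
      = (∏ k ∈ univ \ {i}, F k (r k)) * F i c := by
  rw [Finset.prod_eq_prod_diff_singleton_mul (mem_univ i)]
  congr 1
  · apply Finset.prod_congr rfl
    intro k hk
    simp only [mem_sdiff, mem_singleton] at hk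
    rw [Function.update_of_ne hk.2]
  · rw [Function.update_self]

lemma factor_shift (H : ℝ) (j c : ℕ) (hj : 0 < j) (hc : 0 < c) :
    ((j:ℝ)) * (c:ℝ) * (H^c / ((c.factorial:ℝ) * (j:ℝ)^c))
      = H * (H^(c-1) / (((c-1).factorial:ℝ) * (j:ℝ)^(c-1))) := by
  obtain ⟨c, rfl⟩ : ∃ c', c = c' + 1 := ⟨c - 1, by omega⟩
  simp only [Nat.add_sub_cancel]
  rw [pow_succ, pow_succ, Nat.factorial_succ]
  have hj0 : (j:ℝ) ≠ 0 := by positivity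
  have hf : ((c.factorial:ℝ)) ≠ 0 := by positivity
  push_cast
  field_simp

lemma Sfun_shift (n s m : ℕ) (i : Fin s) (him : (i:ℕ) < m) (hm : m ≤ s) :
    ∑ r ∈ (Fintype.piFinset fun _ : Fin s => Finset.range (s + 1)).filter
        (fun r => ∑ k : Fin s, ((k : ℕ) + 1) * r k = m),
      (((i:ℕ):ℝ)+1) * ((r i : ℕ):ℝ) *
        ∏ k : Fin s, harmonicOrder n ((k : ℕ) + 1) ^ (r k) /
          (((r k).factorial : ℝ) * ((k : ℕ) + 1) ^ (r k))
    = harmonicOrder n ((i:ℕ)+1) * Sfun n s (m - ((i:ℕ)+1)) := by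
  rw [Sfun, Finset.mul_sum]
  rw [← Finset.sum_filter_of_ne (p := fun r => 0 < r i)
    (hp := by
      intro r _ hne
      by_contra hri
      push_neg at hri
      interval_cases h : r i <;> simp_all)]
  refine Finset.sum_bij' (fun r _ => Function.update r i (r i - 1))
    (fun r _ => Function.update r i (r i + 1)) ?_ ?_ ?_ ?_ ?_
  · -- hi : maps into target
    intro r hr
    simp only [Finset.mem_filter, Fintype.mem_piFinset, Finset.mem_range] at hr ⊢
    obtain ⟨⟨hpi, hw⟩, hpos⟩ := hr
    refine ⟨fun k => ?_, ?_⟩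
    · rcases eq_or_ne k i with rfl | hk
      · rw [Function.update_self]; exact lt_of_le_of_lt (by omega) (hpi k)
      · rw [Function.update_of_ne hk]; exact hpi k
    · rw [weight_update, hw]
      have hb : ((i:ℕ)+1) * r i ≤ m := weight_bound hw i
      have : ((i:ℕ)+1) * (r i - 1) + ((i:ℕ)+1) = ((i:ℕ)+1) * r i := by
        rw [← Nat.mul_succ]; congr 1; omega
      omega
  · -- hj : inverse maps back
    intro r hr
    simp only [Finset.mem_filter, Fintype.mem_piFinset, Finset.mem_range] at hr ⊢
    obtain ⟨hpi, hw⟩ := hr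
    have hb : ((i:ℕ)+1) * r i ≤ m - ((i:ℕ)+1) := weight_bound hw i
    have hmul : ((i:ℕ)+1) * (r i + 1) = ((i:ℕ)+1) * r i + ((i:ℕ)+1) := by
      rw [Nat.mul_succ]
    have hle : r i + 1 ≤ ((i:ℕ)+1) * (r i + 1) := Nat.le_mul_of_pos_left _ (by omega)
    refine ⟨⟨fun k => ?_, ?_⟩, ?_⟩
    · rcases eq_or_ne k i with rfl | hk
      · rw [Function.update_self]; omega
      · rw [Function.update_of_ne hk]; exact hpi k
    · rw [weight_update, hw]
      omega
    · rw [Function.update_self]; omega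
  · -- left inverse
    intro r hr
    simp only [Finset.mem_filter] at hr
    funext k
    rcases eq_or_ne k i with rfl | hk
    · simp only [Function.update_self]
      have := hr.2
      omega
    · simp [Function.update_of_ne hk]
  · -- right inverse
    intro r hr
    funext k
    rcases eq_or_ne k i with rfl | hk
    · simp only [Function.update_self]; omega
    · simp [Function.update_of_ne hk]
  · -- values
    intro r hr
    simp only [Finset.mem_filter, Fintype.mem_piFinset, Finset.mem_range] at hr
    obtain ⟨⟨hpi, hw⟩, hpos⟩ := hr
    rw [prod_update (fun k c => harmonicOrder n ((k:ℕ)+1)^c / ((c.factorial:ℝ) * (((k:ℕ):ℝ)+1)^c))]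
    rw [Finset.prod_eq_prod_diff_singleton_mul (mem_univ i)
      (fun k => harmonicOrder n ((k:ℕ)+1)^(r k) / (((r k).factorial:ℝ) * (((k:ℕ):ℝ)+1)^(r k)))]
    have E := factor_shift (harmonicOrder n ((i:ℕ)+1)) ((i:ℕ)+1) (r i) (by omega) hpos
    push_cast at E ⊢
    linear_combination (∏ k ∈ univ \ {i},
      harmonicOrder n ((k:ℕ)+1)^(r k) / (((r k).factorial:ℝ) * (((k:ℕ):ℝ)+1)^(r k))) * E

lemma Sfun_zero (n s : ℕ) : Sfun n s 0 = 1 := by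
  rw [Sfun]
  have hset : (Fintype.piFinset fun _ : Fin s => range (s+1)).filter
      (fun r => ∑ i : Fin s, ((i:ℕ)+1) * r i = 0) = {fun _ => 0} := by
    ext r
    simp only [Finset.mem_filter, Fintype.mem_piFinset, Finset.mem_range, Finset.mem_singleton]
    constructor
    · rintro ⟨-, hw⟩
      funext i
      have h0 : ((i:ℕ)+1) * r i = 0 := Nat.le_zero.mp (weight_bound hw i)
      rcases Nat.mul_eq_zero.mp h0 with h | h <;> omega
    · rintro rfl
      simp
  rw [hset, Finset.sum_singleton]
  simp

lemma Sfun_newton (n s m : ℕ) (hm : m ≤ s) :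
    (m:ℝ) * Sfun n s m = ∑ j ∈ range m, harmonicOrder n (j+1) * Sfun n s (m-(j+1)) := by
  have step1 : (m:ℝ) * Sfun n s m
      = ∑ r ∈ (Fintype.piFinset fun _ : Fin s => Finset.range (s + 1)).filter
          (fun r => ∑ i : Fin s, ((i : ℕ) + 1) * r i = m),
        ∑ i : Fin s, (((i:ℕ):ℝ)+1) * ((r i : ℕ):ℝ) *
          ∏ k : Fin s, harmonicOrder n ((k : ℕ) + 1) ^ (r k) /
            (((r k).factorial : ℝ) * ((k : ℕ) + 1) ^ (r k)) := by
    rw [Sfun, Finset.mul_sum]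
    apply Finset.sum_congr rfl
    intro r hr
    simp only [Finset.mem_filter] at hr
    have hw := hr.2
    have hcast : (m:ℝ) = ∑ i : Fin s, (((i:ℕ):ℝ)+1) * ((r i : ℕ):ℝ) := by
      rw [← hw]
      push_cast
      rfl
    rw [hcast, Finset.sum_mul]
  rw [step1, Finset.sum_comm]
  have step3 : ∀ i : Fin s,
      (∑ r ∈ (Fintype.piFinset fun _ : Fin s => Finset.range (s + 1)).filter
          (fun r => ∑ k : Fin s, ((k : ℕ) + 1) * r k = m),
        (((i:ℕ):ℝ)+1) * ((r i : ℕ):ℝ) *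
          ∏ k : Fin s, harmonicOrder n ((k : ℕ) + 1) ^ (r k) /
            (((r k).factorial : ℝ) * ((k : ℕ) + 1) ^ (r k)))
      = if (i:ℕ) < m then harmonicOrder n ((i:ℕ)+1) * Sfun n s (m-((i:ℕ)+1)) else 0 := by
    intro i
    rcases lt_or_ge (i:ℕ) m with him | him
    · rw [if_pos him]
      exact Sfun_shift n s m i him hm
    · rw [if_neg (by omega)]
      apply Finset.sum_eq_zero
      intro r hr
      simp only [Finset.mem_filter] at hr
      have hb := weight_bound hr.2 i
      have hri : r i = 0 := by
        by_contra h
        have : (i:ℕ)+1 ≤ ((i:ℕ)+1) * r i := Nat.le_mul_of_pos_right _ (by omega)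
        omega
      rw [hri]
      simp
  rw [Finset.sum_congr rfl (fun i _ => step3 i)]
  rw [Fin.sum_univ_eq_sum_range
    (fun j => if j < m then harmonicOrder n (j+1) * Sfun n s (m-(j+1)) else 0) s]
  rw [← Finset.sum_subset (Finset.range_subset_range.mpr hm)
    (fun x _ hx => by rw [if_neg (by simp only [mem_range] at hx; omega)])]
  apply Finset.sum_congr rfl
  intro j hj
  simp only [mem_range] at hj
  rw [if_pos hj]

lemma Sfun_eq_hfun (n s : ℕ) : ∀ m ≤ s, Sfun n s m = hfun n m := by
  intro m
  induction m using Nat.strong_induction_on with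
  | _ m ih =>
    intro hm
    cases m with
    | zero => rw [Sfun_zero, hfun_zero]
    | succ m =>
      have h1 := Sfun_newton n s (m+1) hm
      have h2 := hfun_newton n (m+1)
      have h3 : ∑ j ∈ range (m+1), harmonicOrder n (j+1) * Sfun n s (m+1-(j+1))
          = ∑ j ∈ range (m+1), harmonicOrder n (j+1) * hfun n (m+1-(j+1)) := by
        apply Finset.sum_congr rfl
        intro j hj
        simp only [mem_range] at hj
        rw [ih (m+1-(j+1)) (by omega) (by omega)]
      have heq : ((m+1:ℕ):ℝ) * Sfun n s (m+1) = ((m+1:ℕ):ℝ) * hfun n (m+1) := by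
        rw [h1, h3, ← h2]
      have hc : ((m+1:ℕ):ℝ) ≠ 0 := by positivity
      exact mul_left_cancel₀ hc heq

/-- **Lemma 5.** For all positive integers `n` and `s`,
`∑_{k=1}^n k^{-s} C(n,k) (-1)^{k+1} = 𝓗_{n,s}`. -/
theorem sum_inv_pow_mul_choose_eq_calH (n s : ℕ) (hn : 0 < n) (hs : 0 < s) :
    ∑ k ∈ Finset.Icc 1 n, (1 / (k : ℝ) ^ s) * (n.choose k : ℝ) * (-1) ^ (k + 1) =
      calH n s := by
  have h1 : (∑ k ∈ Finset.Icc 1 n, (1 / (k : ℝ) ^ s) * (n.choose k : ℝ) * (-1) ^ (k + 1))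
      = Afun n s := rfl
  have h2 : calH n s = Sfun n s s := rfl
  rw [h1, h2, Afun_eq_hfun n s hn, ← Sfun_eq_hfun n s s le_rfl]
end

section
/- The sequence (n/log n)·d_max converges to 1 in probability as n → ∞; that is, for every ε > 0, P(|(n/log n)·d_max − 1| > ε) → 0 as n → ∞. -/
/-!
Write `ℓ = log n / n`. If `d_max ≥ (1 + ε) ℓ`, the empty gap contains one of the `n` arcs
`[k / n, k / n + (1 + ε) ℓ - 1 / n)`; each of them is empty with probability
`(1 - (1 + ε) ℓ + 1 / n) ^ n ≤ e · n ^ (-1 - ε)`, so a union bound gives `O(n ^ (-ε))`.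
If `d_max < (1 - ε) ℓ`, each of the `m ≈ 1 / ((1 - ε) ℓ)` disjoint intervals
`[k (1 - ε) ℓ, (k + 1) (1 - ε) ℓ)` contains a point. The number of empty intervals has mean
`m (1 - (1 - ε) ℓ) ^ n ≳ n ^ (ε / 2) / log n → ∞`, and two disjoint intervals are both empty with
probability `(1 - 2 (1 - ε) ℓ) ^ n`, at most the square of that of one; by the second moment
method the count vanishes with probability at most the inverse of its mean.
-/

open Finset MeasureTheory ProbabilityTheory

/-- The points `x 0, …, x (n-1)` rearranged in nondecreasing order
(the order statistics `X_(1) ≤ … ≤ X_(n)`). -/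
noncomputable def sortedPts {n : ℕ} (x : Fin n → ℝ) : Fin n → ℝ :=
  x ∘ Tuple.sort x

/-- The largest spacing between `n` points of `[0,1]` regarded as points on a
circle of perimeter `1`: with `y = sortedPts x` the order statistics, this is
`max {y_(2)-y_(1), …, y_(n)-y_(n-1), 1-y_(n)+y_(1)}`. -/
noncomputable def maxSpacing {n : ℕ} (x : Fin n → ℝ) : ℝ :=
  ⨆ i : Fin n,
    if h : (i : ℕ) + 1 < n then sortedPts x ⟨(i : ℕ) + 1, h⟩ - sortedPts x i
    else 1 - sortedPts x i + sortedPts x ⟨0, i.pos⟩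

/-- The smallest spacing between `n` points of `[0,1]` regarded as points on a
circle of perimeter `1`. -/
noncomputable def minSpacing {n : ℕ} (x : Fin n → ℝ) : ℝ :=
  ⨅ i : Fin n,
    if h : (i : ℕ) + 1 < n then sortedPts x ⟨(i : ℕ) + 1, h⟩ - sortedPts x i
    else 1 - sortedPts x i + sortedPts x ⟨0, i.pos⟩

open Set Filter Real
open scoped ENNReal Topology

section Spacing

variable {n : ℕ} {x : Fin n → ℝ}

noncomputable def spacing (x : Fin n → ℝ) (i : Fin n) : ℝ :=
  if h : (i : ℕ) + 1 < n then sortedPts x ⟨(i : ℕ) + 1, h⟩ - sortedPts x i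
  else 1 - sortedPts x i + sortedPts x ⟨0, i.pos⟩

theorem maxSpacing_eq_iSup_spacing (x : Fin n → ℝ) : maxSpacing x = ⨆ i, spacing x i := rfl

theorem spacing_le_maxSpacing (i : Fin n) : spacing x i ≤ maxSpacing x := by
  rw [maxSpacing_eq_iSup_spacing]
  exact le_ciSup (finite_range _).bddAbove i

theorem exists_le_spacing_of_le_maxSpacing [Nonempty (Fin n)] {t : ℝ}
    (h : t ≤ maxSpacing x) : ∃ i, t ≤ spacing x i := by
  obtain ⟨i, hi⟩ := Finite.exists_max (spacing x)
  rw [maxSpacing_eq_iSup_spacing] at h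
  exact ⟨i, h.trans (ciSup_le hi)⟩

theorem monotone_sortedPts (x : Fin n → ℝ) : Monotone (sortedPts x) := Tuple.monotone_sort x

theorem sortedPts_mem_Icc (hx : ∀ i, x i ∈ Icc (0 : ℝ) 1) (k : Fin n) :
    sortedPts x k ∈ Icc (0 : ℝ) 1 := hx _

theorem exists_sortedPts_eq (x : Fin n → ℝ) (j : Fin n) : ∃ k, sortedPts x k = x j :=
  ⟨(Tuple.sort x)⁻¹ j, by simp [sortedPts]⟩

theorem mem_Ioo_or_add_one_mem_Ioo_of_fract_sub_mem_Ioo {u v t : ℝ} (hu : u ∈ Icc (0 : ℝ) 1)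
    (hv : v ∈ Icc (0 : ℝ) 1) (h : Int.fract (u - v) ∈ Ioo 0 t) :
    u ∈ Ioo v (v + t) ∨ u + 1 ∈ Ioo v (v + t) := by
  obtain ⟨hu0, hu1⟩ := hu
  obtain ⟨hv0, hv1⟩ := hv
  obtain ⟨h0, ht⟩ := h
  rw [← Int.self_sub_floor] at h0 ht
  have hlo : (-1 : ℤ) ≤ ⌊u - v⌋ := Int.le_floor.2 (by push_cast; linarith)
  have hhi : ⌊u - v⌋ ≤ 1 := Int.floor_le_iff.2 (by push_cast; linarith)
  rcases (by omega : ⌊u - v⌋ = -1 ∨ ⌊u - v⌋ = 0 ∨ ⌊u - v⌋ = 1) with hz | hz | hz <;>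
    rw [hz] at h0 ht <;> push_cast at h0 ht
  · exact Or.inr ⟨by linarith, by linarith⟩
  · exact Or.inl ⟨by linarith, by linarith⟩
  · linarith

theorem exists_forall_fract_sub_notMem_Ioo_of_le_maxSpacing (hn : 0 < n)
    (hx : ∀ i, x i ∈ Icc (0 : ℝ) 1) {t : ℝ} (h : t ≤ maxSpacing x) :
    ∃ i, ∀ j, Int.fract (x j - x i) ∉ Ioo 0 t := by
  have : Nonempty (Fin n) := ⟨⟨0, hn⟩⟩
  obtain ⟨i, hi⟩ := exists_le_spacing_of_le_maxSpacing h
  set y := sortedPts x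
  have hy := sortedPts_mem_Icc hx
  have hmono := monotone_sortedPts x
  refine ⟨Tuple.sort x i, fun j hj => ?_⟩
  obtain ⟨k, hk⟩ := exists_sortedPts_eq x j
  rw [← hk] at hj
  have hk0 := (hy k).1
  have hcases := mem_Ioo_or_add_one_mem_Ioo_of_fract_sub_mem_Ioo (hy k) (hy i) hj
  rw [spacing] at hi
  split_ifs at hi with hlast
  · have hnext := (hy ⟨i + 1, hlast⟩).2
    rcases le_or_gt k i with hki | hki
    · have := hmono hki
      rcases hcases with h' | h' <;> linarith [h'.1, h'.2]
    · have := hmono (show (⟨i + 1, hlast⟩ : Fin n) ≤ k from Fin.le_iff_val_le_val.2 hki)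
      rcases hcases with h' | h' <;> linarith [h'.1, h'.2]
  · have hki := hmono (show k ≤ i from Fin.le_iff_val_le_val.2 (by omega))
    have h0 := hmono (show (⟨0, i.pos⟩ : Fin n) ≤ k from Fin.le_iff_val_le_val.2 (Nat.zero_le _))
    rcases hcases with h' | h' <;> linarith [h'.1, h'.2]

theorem le_maxSpacing_of_forall_notMem_Ico (hn : 0 < n) (hx : ∀ i, x i ∈ Icc (0 : ℝ) 1)
    {a t : ℝ} (ha : 0 ≤ a) (hat : a + t ≤ 1) (h : ∀ j, x j ∉ Ico a (a + t)) :
    t ≤ maxSpacing x := by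
  by_contra! hlt
  have hsp : ∀ i, spacing x i < t := fun i => (spacing_le_maxSpacing i).trans_lt hlt
  set y := sortedPts x
  have hy := sortedPts_mem_Icc hx
  have hgap : ∀ k, y k ∉ Ico a (a + t) := fun k => h _
  have hwrap := hsp ⟨n - 1, by omega⟩
  rw [spacing, dif_neg (by simp; omega)] at hwrap
  have hlast := (hy ⟨n - 1, by omega⟩).2
  by_cases h0 : y ⟨0, hn⟩ < a
  · -- all points then lie below `a`, and the wrap-around spacing exceeds `1 - a ≥ t`
    have hall : ∀ k (hk : k < n), y ⟨k, hk⟩ < a := by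
      intro k
      induction k with
      | zero => exact fun _ => h0
      | succ k ih =>
        intro hk
        have hstep := hsp ⟨k, by omega⟩
        rw [spacing, dif_pos hk] at hstep
        have := ih (by omega)
        by_contra! hge
        exact hgap _ ⟨hge, by linarith⟩
    linarith [hall (n - 1) (by omega), (hy ⟨0, hn⟩).1]
  · have := hgap ⟨0, hn⟩
    simp only [Set.mem_Ico, not_and, not_lt] at this
    linarith [this (not_lt.1 h0)]

end Spacing

section Arc

/-- The half-open arc `[a, a + s)` of the circle `ℝ / ℤ`, lifted to `ℝ`. -/
def arc (a s : ℝ) : Set ℝ := {y | Int.fract (y - a) < s}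

theorem measurableSet_arc (a s : ℝ) : MeasurableSet (arc a s) :=
  measurableSet_lt (measurable_fract.comp (measurable_id.sub_const a)) measurable_const

theorem arc_fract (a s : ℝ) : arc (Int.fract a) s = arc a s := by
  ext y
  rw [arc, arc, mem_ofPred_eq, mem_ofPred_eq,
    show y - Int.fract a = y - a + ⌊a⌋ by rw [← Int.self_sub_floor a]; ring,
    Int.fract_add_intCast]

theorem notMem_arc_of_fract_sub_notMem_Ioo {y c a s t : ℝ} (h : Int.fract (y - c) ∉ Ioo 0 t)
    (hca : c < a) (has : a + s ≤ c + t) (ht : t ≤ 1) : y ∉ arc a s := by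
  intro hy
  rw [arc, mem_ofPred_eq] at hy
  have hfract : Int.fract (y - c) = Int.fract (y - a) + (a - c) :=
    Int.fract_eq_iff.2 ⟨by linarith [Int.fract_nonneg (y - a)], by linarith,
      ⌊y - a⌋, by rw [← Int.self_sub_floor (y - a)]; ring⟩
  exact h ⟨by linarith [Int.fract_nonneg (y - a)], by linarith⟩

theorem exists_forall_notMem_arc_of_le_maxSpacing {n : ℕ} {x : Fin n → ℝ} (hn : 0 < n)
    (hx : ∀ i, x i ∈ Icc (0 : ℝ) 1) {N : ℕ} (hN : 0 < N) {t : ℝ} (ht : t ≤ 1)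
    (h : t ≤ maxSpacing x) : ∃ k < N, ∀ j, x j ∉ arc (k / N) (t - 1 / N) := by
  obtain ⟨i, hi⟩ := exists_forall_fract_sub_notMem_Ioo_of_le_maxSpacing hn hx h
  have hN' : (0 : ℝ) < N := Nat.cast_pos.2 hN
  -- the grid point `K / N` lies in `(x i, x i + 1 / N]`
  set K := ⌊x i * N⌋₊ + 1
  refine ⟨K % N, Nat.mod_lt _ hN, fun j => ?_⟩
  rw [← Int.fract_div_natCast_eq_div_natCast_mod, arc_fract]
  refine notMem_arc_of_fract_sub_notMem_Ioo (hi j) ?_ ?_ ht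
  · rw [lt_div_iff₀ hN']
    exact_mod_cast Nat.lt_floor_add_one (x i * N)
  · have : (K : ℝ) ≤ x i * N + 1 := by
      push_cast [K]; linarith [Nat.floor_le (mul_nonneg (hx i).1 hN'.le)]
    have : (K : ℝ) / N ≤ x i + 1 / N := by
      rw [div_le_iff₀ hN', add_mul, one_div_mul_cancel hN'.ne']; linarith
    linarith

/-- The arc is the preimage of a subset of `UnitAddCircle`, so its Lebesgue measure in a window
`(t, t + 1]` does not depend on `t`. -/
theorem volume_arc_inter_Icc (a : ℝ) {s : ℝ} (hs : s ≤ 1) :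
    volume (arc a s ∩ Icc 0 1) = ENNReal.ofReal s := by
  set U : Set UnitAddCircle :=
    {z | (AddCircle.equivIco 1 0 (z - (a : UnitAddCircle)) : ℝ) < s}
  have hU : QuotientAddGroup.mk ⁻¹' U = arc a s := by
    ext y
    simp [U, arc, ← QuotientAddGroup.mk_sub]
  have hUm : MeasurableSet U := measurableSet_quotient.2 (hU ▸ measurableSet_arc a s)
  calc volume (arc a s ∩ Icc 0 1) = volume (arc a s ∩ Ioc 0 (0 + 1)) := by
        rw [zero_add]; exact measure_congr (ae_eq_refl _ |>.inter Ioc_ae_eq_Icc.symm)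
    _ = volume (arc a s ∩ Ioc a (a + 1)) := by
        rw [← hU, ← AddCircle.add_projection_respects_measure 1 0 hUm,
          AddCircle.add_projection_respects_measure 1 a hUm]
    _ = volume (Ico a (a + s)) := by
        rw [measure_congr (ae_eq_refl _ |>.inter Ico_ae_eq_Ioc.symm)]
        congr 1
        ext y
        simp only [arc, mem_inter_iff, mem_ofPred_eq, Set.mem_Ico]
        constructor
        · rintro ⟨h, h1, h2⟩
          rw [Int.fract_eq_self.2 ⟨by linarith, by linarith⟩] at h
          exact ⟨h1, by linarith⟩
        · rintro ⟨h1, h2⟩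
          rw [Int.fract_eq_self.2 ⟨by linarith, by linarith⟩]
          exact ⟨by linarith, h1, by linarith⟩
    _ = ENNReal.ofReal s := by rw [Real.volume_Ico, add_sub_cancel_left]

end Arc

section Probability

variable {Ω : Type*} [MeasurableSpace Ω] {μ : Measure Ω}

theorem sq_lintegral_le_lintegral_sq_mul_measure {f : Ω → ℝ≥0∞} (hf : AEMeasurable f μ)
    {U : Set Ω} (hU : MeasurableSet U) (hfU : ∀ ω ∉ U, f ω = 0) :
    (∫⁻ ω, f ω ∂μ) ^ 2 ≤ (∫⁻ ω, f ω ^ 2 ∂μ) * μ U := by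
  have hfg : f * U.indicator 1 = f := by
    funext ω
    by_cases hω : ω ∈ U
    · simp [hω]
    · simp [hω, hfU ω hω]
  have hholder := ENNReal.lintegral_mul_le_Lp_mul_Lq μ Real.HolderConjugate.two_two hf
    ((measurable_one.indicator hU).aemeasurable)
  have hind : ∫⁻ ω, U.indicator 1 ω ^ (2 : ℝ) ∂μ = μ U := by
    rw [← lintegral_indicator_one hU]
    congr 1; funext ω
    by_cases hω : ω ∈ U <;> simp [hω]
  rw [hind, hfg] at hholder
  calc (∫⁻ ω, f ω ∂μ) ^ 2
      ≤ ((∫⁻ ω, f ω ^ (2 : ℝ) ∂μ) ^ (1 / 2 : ℝ) * μ U ^ (1 / 2 : ℝ)) ^ 2 := by gcongr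
    _ = (∫⁻ ω, f ω ^ 2 ∂μ) * μ U := by
      rw [mul_pow, ← ENNReal.rpow_natCast, ← ENNReal.rpow_natCast (μ U ^ _),
        ← ENNReal.rpow_mul, ← ENNReal.rpow_mul]
      norm_num

theorem lintegral_sum_indicator_one {ι : Type*} (s : Finset ι) {A : ι → Set Ω}
    (hA : ∀ i ∈ s, MeasurableSet (A i)) :
    ∫⁻ ω, ∑ i ∈ s, (A i).indicator 1 ω ∂μ = ∑ i ∈ s, μ (A i) := by
  rw [lintegral_finsetSum _ fun i hi => measurable_one.indicator (hA i hi)]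
  exact sum_congr rfl fun i hi => lintegral_indicator_one (hA i hi)

theorem lintegral_sq_sum_indicator_one {ι : Type*} (s : Finset ι) {A : ι → Set Ω}
    (hA : ∀ i ∈ s, MeasurableSet (A i)) :
    ∫⁻ ω, (∑ i ∈ s, (A i).indicator 1 ω) ^ 2 ∂μ = ∑ i ∈ s, ∑ j ∈ s, μ (A i ∩ A j) := by
  have hpt : ∀ ω, (∑ i ∈ s, (A i).indicator 1 ω) ^ 2 =
      ∑ i ∈ s, ∑ j ∈ s, (A i ∩ A j).indicator (1 : Ω → ℝ≥0∞) ω := fun ω => by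
    simp only [sq, sum_mul_sum, Set.inter_indicator_one, Pi.mul_apply]
  simp_rw [hpt]
  rw [lintegral_finsetSum _ fun i hi => Finset.measurable_sum _ fun j hj =>
    measurable_one.indicator ((hA i hi).inter (hA j hj))]
  exact sum_congr rfl fun i hi =>
    lintegral_sum_indicator_one s fun j hj => (hA i hi).inter (hA j hj)

theorem sum_sum_measure_inter_le {ι : Type*} (s : Finset ι) {A : ι → Set Ω} {p : ℝ≥0∞}
    (hpair : ∀ i ∈ s, ∀ j ∈ s, i ≠ j → μ (A i ∩ A j) ≤ p ^ 2) :
    ∑ i ∈ s, ∑ j ∈ s, μ (A i ∩ A j) ≤ ∑ i ∈ s, μ (A i) + (#s * p) ^ 2 := by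
  classical
  have hrow : ∀ i ∈ s, ∑ j ∈ s, μ (A i ∩ A j) ≤ μ (A i) + #s * p ^ 2 := fun i hi => by
    rw [← add_sum_erase _ _ hi, Set.inter_self]
    gcongr
    calc ∑ j ∈ s.erase i, μ (A i ∩ A j) ≤ ∑ j ∈ s.erase i, p ^ 2 :=
          sum_le_sum fun j hj => hpair i hi j (mem_of_mem_erase hj) (ne_of_mem_erase hj).symm
      _ ≤ #s * p ^ 2 := by
        rw [sum_const, nsmul_eq_mul]; gcongr; exact erase_subset i s
  calc ∑ i ∈ s, ∑ j ∈ s, μ (A i ∩ A j) ≤ ∑ i ∈ s, (μ (A i) + #s * p ^ 2) := sum_le_sum hrow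
    _ = ∑ i ∈ s, μ (A i) + (#s * p) ^ 2 := by rw [sum_add_distrib, sum_const, nsmul_eq_mul]; ring

/-- The second moment method: for the number `N` of events that occur, Cauchy–Schwarz gives
`(∫ N)² ≤ ∫ N² · μ (N ≠ 0)`. -/
theorem measure_biInter_compl_mul_le_one [IsProbabilityMeasure μ] {ι : Type*} (s : Finset ι)
    {A : ι → Set Ω} (hA : ∀ i ∈ s, MeasurableSet (A i)) {p : ℝ≥0∞}
    (hp : ∀ i ∈ s, p ≤ μ (A i)) (hpair : ∀ i ∈ s, ∀ j ∈ s, i ≠ j → μ (A i ∩ A j) ≤ p ^ 2) :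
    μ (⋂ i ∈ s, (A i)ᶜ) * (#s * p) ≤ 1 := by
  set N : Ω → ℝ≥0∞ := fun ω => ∑ i ∈ s, (A i).indicator 1 ω
  set U := ⋃ i ∈ s, A i
  set S := ∑ i ∈ s, μ (A i)
  have hU : MeasurableSet U := Finset.measurableSet_biUnion _ hA
  have hmp : #s * p ≤ S := by
    rw [← nsmul_eq_mul]; exact card_nsmul_le_sum _ _ _ hp
  have hS_top : S ≠ ⊤ := ENNReal.sum_ne_top.2 fun i _ => measure_ne_top μ _
  have hNU : ∀ ω ∉ U, N ω = 0 := fun ω hω => sum_eq_zero fun i hi =>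
    Set.indicator_of_notMem (fun h => hω (Set.mem_biUnion hi h)) _
  have hCS : S ^ 2 ≤ (S + S ^ 2) * μ U :=
    calc S ^ 2 = (∫⁻ ω, N ω ∂μ) ^ 2 := by rw [lintegral_sum_indicator_one s hA]
      _ ≤ (∫⁻ ω, N ω ^ 2 ∂μ) * μ U := sq_lintegral_le_lintegral_sq_mul_measure
          (Finset.measurable_sum _ fun i hi => measurable_one.indicator (hA i hi)).aemeasurable
          hU hNU
      _ ≤ (S + S ^ 2) * μ U := by
        rw [lintegral_sq_sum_indicator_one s hA]
        gcongr
        exact (sum_sum_measure_inter_le s hpair).trans (by gcongr)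
  have hS_le : S ≤ μ U + S * μ U := by
    rcases eq_or_ne S 0 with h0 | h0
    · simp [h0]
    rw [sq, show (S + S * S) * μ U = S * (μ U + S * μ U) by ring] at hCS
    exact (ENNReal.mul_le_mul_iff_right h0 hS_top).1 hCS
  calc μ (⋂ i ∈ s, (A i)ᶜ) * (#s * p) ≤ (1 - μ U) * S := by
        rw [← Set.compl_iUnion₂, prob_compl_eq_one_sub hU]; gcongr
    _ = S - μ U * S := by rw [ENNReal.sub_mul fun _ _ => hS_top, one_mul]
    _ ≤ μ U := tsub_le_iff_right.2 (by rw [mul_comm]; exact hS_le)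
    _ ≤ 1 := prob_le_one

theorem measure_iInter_preimage_eq_pow {ι β : Type*} [Fintype ι] [MeasurableSpace β]
    {X : ι → Ω → β} {ν : Measure β} (hX : ∀ i, Measurable (X i)) (hind : iIndepFun X μ)
    (hlaw : ∀ i, μ.map (X i) = ν) {T : Set β} (hT : MeasurableSet T) :
    μ (⋂ i, X i ⁻¹' T) = ν T ^ Fintype.card ι := by
  rw [hind.meas_iInter fun i => ⟨T, hT, rfl⟩]
  simp_rw [← Measure.map_apply (hX _) hT, hlaw, prod_const, card_univ]

theorem ae_forall_mem_of_map_eq_restrict {ι β : Type*} [Countable ι] [MeasurableSpace β]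
    {X : ι → Ω → β} {ν : Measure β} {S : Set β} (hX : ∀ i, AEMeasurable (X i) μ)
    (hS : MeasurableSet S) (hlaw : ∀ i, μ.map (X i) = ν.restrict S) :
    ∀ᵐ ω ∂μ, ∀ i, X i ω ∈ S :=
  ae_all_iff.2 fun i => ae_of_ae_map (hX i) (hlaw i ▸ ae_restrict_mem hS)

variable {n : ℕ} {X : Fin n → Ω → ℝ}

theorem measure_iInter_preimage_compl_eq (hX : ∀ i, Measurable (X i)) (hind : iIndepFun X μ)
    (hlaw : ∀ i, μ.map (X i) = volume.restrict (Icc 0 1)) {S : Set ℝ} (hS : MeasurableSet S) :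
    μ (⋂ j, X j ⁻¹' Sᶜ) = (1 - volume (S ∩ Icc 0 1)) ^ n := by
  have : IsProbabilityMeasure (volume.restrict (Icc (0 : ℝ) 1)) := ⟨by simp⟩
  rw [measure_iInter_preimage_eq_pow hX hind hlaw hS.compl, Fintype.card_fin,
    prob_compl_eq_one_sub hS, Measure.restrict_apply hS]

theorem measure_le_maxSpacing_le (hn : 0 < n) (hX : ∀ i, Measurable (X i)) (hind : iIndepFun X μ)
    (hlaw : ∀ i, μ.map (X i) = volume.restrict (Icc 0 1)) {N : ℕ} (hN : 0 < N) {t : ℝ}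
    (ht : t ≤ 1) :
    μ {ω | t ≤ maxSpacing (X · ω)} ≤ ENNReal.ofReal (N * (1 - (t - 1 / N)) ^ n) := by
  set s := t - 1 / N
  have hs : s ≤ 1 := by linarith [show (0 : ℝ) ≤ 1 / N by positivity]
  set E : ℕ → Set Ω := fun k => ⋂ j, X j ⁻¹' (arc (k / N) s)ᶜ
  have hsub : {ω | t ≤ maxSpacing (X · ω)} ≤ᵐ[μ] ⋃ k ∈ range N, E k := by
    filter_upwards [ae_forall_mem_of_map_eq_restrict (fun i => (hX i).aemeasurable)
      measurableSet_Icc hlaw] with ω hω hle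
    obtain ⟨k, hk, hfree⟩ := exists_forall_notMem_arc_of_le_maxSpacing hn hω hN ht hle
    exact mem_biUnion (mem_range.2 hk) (mem_iInter.2 hfree)
  have hE : ∀ k, μ (E k) ≤ ENNReal.ofReal (1 - s) ^ n := fun k => by
    rw [measure_iInter_preimage_compl_eq hX hind hlaw (measurableSet_arc _ _),
      volume_arc_inter_Icc _ hs]
    gcongr
    rcases le_total 0 s with h0 | h0
    · rw [← ENNReal.ofReal_one, ← ENNReal.ofReal_sub _ h0]
    · rw [ENNReal.ofReal_of_nonpos h0, tsub_zero]
      exact ENNReal.one_le_ofReal.2 (by linarith)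
  calc μ {ω | t ≤ maxSpacing (X · ω)} ≤ μ (⋃ k ∈ range N, E k) := measure_mono_ae hsub
    _ ≤ ∑ k ∈ range N, μ (E k) := measure_biUnion_finset_le _ _
    _ ≤ ∑ _k ∈ range N, ENNReal.ofReal (1 - s) ^ n := sum_le_sum fun k _ => hE k
    _ = ENNReal.ofReal (N * (1 - s) ^ n) := by
      rw [sum_const, card_range, nsmul_eq_mul, ENNReal.ofReal_mul (by positivity),
        ENNReal.ofReal_pow (by linarith), ENNReal.ofReal_natCast]

/-- Two disjoint sets of measure `t` are both free of points with probability
`(1 - 2 t) ^ n ≤ ((1 - t) ^ n) ^ 2`, which is what the second moment method needs. -/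
theorem measure_forall_exists_mem_mul_le_one [IsProbabilityMeasure μ]
    (hX : ∀ i, Measurable (X i)) (hind : iIndepFun X μ)
    (hlaw : ∀ i, μ.map (X i) = volume.restrict (Icc 0 1)) {ι : Type*} (s : Finset ι)
    {S : ι → Set ℝ} (hS : ∀ k ∈ s, MeasurableSet (S k)) (hS01 : ∀ k ∈ s, S k ⊆ Icc 0 1)
    (hdisj : (s : Set ι).PairwiseDisjoint S) {t : ℝ} (ht : 0 ≤ t)
    (hvol : ∀ k ∈ s, volume (S k) = ENNReal.ofReal t) :
    μ {ω | ∀ k ∈ s, ∃ j, X j ω ∈ S k} * ENNReal.ofReal (#s * (1 - t) ^ n) ≤ 1 := by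
  set A : ι → Set Ω := fun k => ⋂ j, X j ⁻¹' (S k)ᶜ
  have hevent : {ω | ∀ k ∈ s, ∃ j, X j ω ∈ S k} = ⋂ k ∈ s, (A k)ᶜ := by
    ext ω; simp [A]
  have hvol' : ∀ k ∈ s, volume (S k ∩ Icc 0 1) = ENNReal.ofReal t := fun k hk => by
    rw [inter_eq_left.2 (hS01 k hk), hvol k hk]
  have ht1 : ∀ k ∈ s, t ≤ 1 := fun k hk => ENNReal.ofReal_le_one.1 <| by
    rw [← hvol k hk]; exact (measure_mono (hS01 k hk)).trans (by simp [Real.volume_Icc])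
  set p := ENNReal.ofReal ((1 - t) ^ n)
  have hA : ∀ k ∈ s, p ≤ μ (A k) := fun k hk => by
    rw [measure_iInter_preimage_compl_eq hX hind hlaw (hS k hk), hvol' k hk,
      ← ENNReal.ofReal_one, ← ENNReal.ofReal_sub _ ht,
      ← ENNReal.ofReal_pow (by linarith [ht1 k hk])]
  have hpair : ∀ k ∈ s, ∀ l ∈ s, k ≠ l → μ (A k ∩ A l) ≤ p ^ 2 := by
    intro k hk l hl hkl
    have hAkl : A k ∩ A l = ⋂ j, X j ⁻¹' (S k ∪ S l)ᶜ := by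
      simp only [A, ← iInter_inter_distrib, Set.compl_union, Set.preimage_inter]
    rw [hAkl, measure_iInter_preimage_compl_eq hX hind hlaw ((hS k hk).union (hS l hl)),
      Set.union_inter_distrib_right, measure_union
        ((hdisj hk hl hkl).mono inter_subset_left inter_subset_left)
        ((hS l hl).inter measurableSet_Icc), hvol' k hk, hvol' l hl,
      ← ENNReal.ofReal_add ht ht, ← ENNReal.ofReal_one, ← ENNReal.ofReal_sub _ (by linarith)]
    calc ENNReal.ofReal (1 - (t + t)) ^ n ≤ ENNReal.ofReal ((1 - t) ^ 2) ^ n := by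
          gcongr; nlinarith
      _ = p ^ 2 := by
          rw [← ENNReal.ofReal_pow (by positivity),
            ← ENNReal.ofReal_pow (pow_nonneg (by linarith [ht1 k hk]) _), ← pow_mul, mul_comm,
            pow_mul]
  rw [hevent, ENNReal.ofReal_mul (Nat.cast_nonneg _), ENNReal.ofReal_natCast]
  exact measure_biInter_compl_mul_le_one s
    (fun k hk => MeasurableSet.iInter fun j => hX j (hS k hk).compl) hA hpair

theorem measure_maxSpacing_lt_mul_le_one [IsProbabilityMeasure μ] (hn : 0 < n)
    (hX : ∀ i, Measurable (X i)) (hind : iIndepFun X μ)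
    (hlaw : ∀ i, μ.map (X i) = volume.restrict (Icc 0 1)) {t : ℝ} (ht : 0 ≤ t) {m : ℕ}
    (hm : m * t ≤ 1) :
    μ {ω | maxSpacing (X · ω) < t} * ENNReal.ofReal (m * (1 - t) ^ n) ≤ 1 := by
  have hI : ∀ k ∈ range m, 0 ≤ k * t ∧ k * t + t ≤ 1 := fun k hk => by
    have : (k : ℝ) + 1 ≤ m := by exact_mod_cast mem_range.1 hk
    constructor <;> nlinarith
  have hdisj : Pairwise (Function.onFun Disjoint fun k : ℕ => Set.Ico (k * t) (k * t + t)) :=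
    (pairwise_disjoint_on _).2 fun k l hkl => by
      have : (k : ℝ) + 1 ≤ l := by exact_mod_cast hkl
      exact Ico_disjoint_Ico_same.mono_right (Set.Ico_subset_Ico_left (by nlinarith))
  have hsub : {ω | maxSpacing (X · ω) < t} ≤ᵐ[μ]
      {ω | ∀ k ∈ range m, ∃ j, X j ω ∈ Ico (k * t) (k * t + t)} := by
    filter_upwards [ae_forall_mem_of_map_eq_restrict (fun i => (hX i).aemeasurable)
      measurableSet_Icc hlaw] with ω hω hlt k hk
    by_contra! hfree
    exact (le_maxSpacing_of_forall_notMem_Ico hn hω (hI k hk).1 (hI k hk).2 hfree).not_gt hlt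
  calc μ {ω | maxSpacing (X · ω) < t} * ENNReal.ofReal (m * (1 - t) ^ n)
      ≤ μ {ω | ∀ k ∈ range m, ∃ j, X j ω ∈ Ico (k * t) (k * t + t)} *
          ENNReal.ofReal (#(range m) * (1 - t) ^ n) := by
        rw [card_range]; exact mul_le_mul_left (measure_mono_ae hsub) _
    _ ≤ 1 := measure_forall_exists_mem_mul_le_one hX hind hlaw _
        (fun _ _ => measurableSet_Ico)
        (fun k hk => Ico_subset_Icc_self.trans (Icc_subset_Icc (hI k hk).1 (hI k hk).2))
        (hdisj.set_pairwise _) ht (fun _ _ => by rw [Real.volume_Ico, add_sub_cancel_left])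

theorem toReal_measure_lt_abs_inv_mul_maxSpacing_sub_one_le [IsProbabilityMeasure μ]
    (hn : 0 < n) (hX : ∀ i, Measurable (X i)) (hind : iIndepFun X μ)
    (hlaw : ∀ i, μ.map (X i) = volume.restrict (Icc 0 1)) {ε ℓ : ℝ} (hε0 : 0 < ε)
    (hε1 : ε < 1) (hℓ : 0 < ℓ) (hℓ1 : (1 + ε) * ℓ ≤ 1) :
    (μ {ω | ε < |ℓ⁻¹ * maxSpacing (X · ω) - 1|}).toReal ≤
      n * (1 - ((1 + ε) * ℓ - 1 / n)) ^ n +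
        (⌊((1 - ε) * ℓ)⁻¹⌋₊ * (1 - (1 - ε) * ℓ) ^ n)⁻¹ := by
  have hbase : 0 ≤ 1 - ((1 + ε) * ℓ - 1 / n) := by
    linarith [show (0 : ℝ) ≤ 1 / n by positivity]
  set t := (1 - ε) * ℓ
  have ht0 : 0 < t := by positivity
  have ht1 : t < 1 := by nlinarith
  have hq : 0 < ⌊t⁻¹⌋₊ * (1 - t) ^ n := by
    have : 1 ≤ ⌊t⁻¹⌋₊ := Nat.one_le_floor_iff _ |>.2 (one_le_inv₀ ht0 |>.2 ht1.le)
    have : 0 < 1 - t := by linarith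
    positivity
  have hup := measure_le_maxSpacing_le hn hX hind hlaw hn hℓ1
  have hlow := measure_maxSpacing_lt_mul_le_one hn hX hind hlaw ht0.le
    ((mul_le_mul_of_nonneg_right (Nat.floor_le (by positivity)) ht0.le).trans_eq
      (inv_mul_cancel₀ ht0.ne'))
  rw [← ENNReal.le_inv_iff_mul_le, ← ENNReal.ofReal_inv_of_pos hq] at hlow
  refine ENNReal.toReal_le_of_le_ofReal (by positivity) ?_
  calc μ {ω | ε < |ℓ⁻¹ * maxSpacing (X · ω) - 1|}
      ≤ μ ({ω | (1 + ε) * ℓ ≤ maxSpacing (X · ω)} ∪ {ω | maxSpacing (X · ω) < t}) := by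
        refine measure_mono fun ω hω => ?_
        rw [Set.mem_ofPred_eq, inv_mul_eq_div] at hω
        rcases lt_abs.1 hω with h | h
        · exact Or.inl ((lt_div_iff₀ hℓ).1 (by linarith)).le
        · exact Or.inr ((div_lt_iff₀ hℓ).1 (by linarith))
    _ ≤ _ := (measure_union_le _ _).trans (add_le_add hup hlow)
    _ = _ := (ENNReal.ofReal_add (by positivity) (by positivity)).symm

end Probability

section Asymptotics

theorem exp_neg_mul_div_one_sub_le_one_sub_pow {t : ℝ} (ht1 : t < 1) (n : ℕ) :
    exp (-(n * t / (1 - t))) ≤ (1 - t) ^ n := by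
  have h1t : 0 < 1 - t := by linarith
  rw [← exp_log (pow_pos h1t n), log_pow]
  gcongr
  have : -(n * t / (1 - t)) = n * (1 - (1 - t)⁻¹) := by field_simp; ring
  rw [this]
  gcongr
  exact one_sub_inv_le_log_of_pos h1t

theorem inv_two_mul_le_floor_inv {t : ℝ} (ht0 : 0 < t) (ht : t ≤ 1 / 2) :
    (2 * t)⁻¹ ≤ ⌊t⁻¹⌋₊ := by
  have : t⁻¹ = 2 * (2 * t)⁻¹ := by field_simp
  have : 1 ≤ (2 * t)⁻¹ := one_le_inv₀ (by positivity) |>.2 (by linarith)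
  linarith [Nat.sub_one_lt_floor t⁻¹]

theorem tendsto_log_div_natCast_nhds_zero : Tendsto (fun n : ℕ => log n / n) atTop (𝓝 0) :=
  isLittleO_log_id_atTop.tendsto_div_nhds_zero.comp tendsto_natCast_atTop_atTop

/-- The upper-tail bound is at most `e · n ^ (-ε)`. -/
theorem tendsto_mul_one_sub_log_div_pow_nhds_zero {ε : ℝ} (hε : 0 < ε) :
    Tendsto (fun n : ℕ => n * (1 - ((1 + ε) * (log n / n) - 1 / n)) ^ n) atTop (𝓝 0) := by
  have hlog := tendsto_log_atTop.comp (tendsto_natCast_atTop_atTop (R := ℝ))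
  have hbound : Tendsto (fun n : ℕ => exp 1 * exp (-(ε * log n))) atTop (𝓝 0) := by
    simpa using (tendsto_exp_atBot.comp
      (tendsto_neg_atTop_atBot.comp (hlog.const_mul_atTop hε))).const_mul (exp 1)
  have hsmall : ∀ᶠ n : ℕ in atTop, (1 + ε) * (log n / n) ≤ 1 :=
    (tendsto_log_div_natCast_nhds_zero.const_mul (1 + ε)).eventually (ge_mem_nhds (by simp))
  refine squeeze_zero' ?_ ?_ hbound <;>
    filter_upwards [eventually_gt_atTop 0, hsmall] with n hn hsmall
  all_goals
    have hn' : (0 : ℝ) < n := Nat.cast_pos.2 hn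
    set u := (1 + ε) * log n - 1
    have hbase : 1 - ((1 + ε) * (log n / n) - 1 / n) = 1 - u / n := by field_simp; ring
    have hu : u ≤ n := by
      rw [← mul_div_assoc, div_le_one hn'] at hsmall
      linarith
    rw [hbase]
  · have : 0 ≤ 1 - u / n := by rw [sub_nonneg, div_le_one hn']; exact hu
    positivity
  · calc (n : ℝ) * (1 - u / n) ^ n ≤ exp (log n) * exp (-u) := by
          rw [exp_log hn']; gcongr; exact one_sub_div_pow_le_exp_neg hu
      _ = exp 1 * exp (-(ε * log n)) := by rw [← exp_add, ← exp_add]; congr 1; ring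

/-- The expected number of empty intervals in the lower tail is at least
`n ^ (ε / 2) / (2 log n)`. -/
theorem tendsto_floor_inv_mul_one_sub_pow_atTop {ε : ℝ} (hε0 : 0 < ε) (hε1 : ε < 1) :
    Tendsto (fun n : ℕ => ⌊((1 - ε) * (log n / n))⁻¹⌋₊ * (1 - (1 - ε) * (log n / n)) ^ n)
      atTop atTop := by
  have hlog := tendsto_log_atTop.comp (tendsto_natCast_atTop_atTop (R := ℝ))
  have hg : Tendsto (fun n : ℕ => exp (ε / 2 * log n) / log n ^ (1 : ℝ) / 2) atTop atTop :=
    ((tendsto_exp_mul_div_rpow_atTop 1 (ε / 2) (by positivity)).comp hlog).atTop_div_const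
      two_pos
  refine tendsto_atTop_mono' _ ?_ hg
  filter_upwards [eventually_ge_atTop 2, tendsto_log_div_natCast_nhds_zero.eventually
    (ge_mem_nhds (show (0 : ℝ) < ε / 2 by positivity))] with n hn hsmall
  have hn' : (0 : ℝ) < n := by positivity
  have hL : 0 < log n := log_pos (by exact_mod_cast hn)
  set t := (1 - ε) * (log n / n)
  have ht0 : 0 < t := by positivity
  have hts : t ≤ ε / 2 := by nlinarith [div_pos hL hn']
  have hfloor : n / (2 * log n) ≤ ⌊t⁻¹⌋₊ := by
    refine le_trans ?_ (inv_two_mul_le_floor_inv ht0 (by linarith))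
    rw [show (2 * t)⁻¹ = n / (2 * (1 - ε) * log n) by simp only [t]; field_simp]
    gcongr
    nlinarith
  have hexp : exp (-(1 - ε / 2) * log n) ≤ (1 - t) ^ n := by
    refine le_trans (exp_le_exp.2 ?_) (exp_neg_mul_div_one_sub_le_one_sub_pow (by linarith) n)
    rw [show n * t = (1 - ε) * log n by simp only [t]; field_simp, neg_mul, neg_le_neg_iff,
      div_le_iff₀ (by linarith)]
    nlinarith [mul_nonneg hL.le (sub_nonneg.2 hts), mul_nonneg (mul_nonneg hL.le ht0.le) hε0.le]
  calc exp (ε / 2 * log n) / log n ^ (1 : ℝ) / 2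
      = n / (2 * log n) * exp (-(1 - ε / 2) * log n) := by
        rw [rpow_one, show ε / 2 * log n = log n + -(1 - ε / 2) * log n by ring, exp_add,
          exp_log hn']
        field_simp
    _ ≤ ⌊t⁻¹⌋₊ * (1 - t) ^ n := by gcongr

end Asymptotics

/-- **Lemma (law of large numbers for `d_max`).** The sequence
`(n / log n) ⬝ d_max` converges to `1` in probability as `n → ∞`. -/
theorem tendsto_inProbability_maxSpacing_div_log
    (Ω : ℕ → Type*) (mΩ : ∀ n, MeasurableSpace (Ω n))
    (μ : ∀ n, Measure (Ω n)) (hprob : ∀ n, IsProbabilityMeasure (μ n))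
    (X : ∀ n, Fin n → Ω n → ℝ)
    (hmeas : ∀ n, 2 ≤ n → ∀ i, Measurable (X n i))
    (hindep : ∀ n, 2 ≤ n → iIndepFun (X n) (μ n))
    (hunif : ∀ n, 2 ≤ n → ∀ i,
      Measure.map (X n i) (μ n) = volume.restrict (Set.Icc (0 : ℝ) 1))
    :
    ∀ ε : ℝ, 0 < ε →
      Tendsto
        (fun n : ℕ =>
          ((μ n) {ω | ε <
            |((n : ℝ) / Real.log n) * maxSpacing (fun i => X n i ω) - 1|}).toReal)
        atTop (nhds 0) := by
  suffices h : ∀ ε : ℝ, 0 < ε → ε < 1 → Tendsto (fun n : ℕ => ((μ n) {ω | ε <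
      |((n : ℝ) / Real.log n) * maxSpacing (fun i => X n i ω) - 1|}).toReal) atTop (nhds 0) by
    intro ε hε
    refine squeeze_zero (fun n => ENNReal.toReal_nonneg) (fun n => ?_)
      (h (min ε (1 / 2)) (lt_min hε one_half_pos) (min_lt_of_right_lt one_half_lt_one))
    have := hprob n
    exact ENNReal.toReal_mono (measure_ne_top _ _)
      (measure_mono fun ω hω => (min_le_left ε _).trans_lt hω)
  intro ε hε0 hε1
  have hlim := (tendsto_mul_one_sub_log_div_pow_nhds_zero hε0).add
    (tendsto_floor_inv_mul_one_sub_pow_atTop hε0 hε1).inv_tendsto_atTop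
  rw [add_zero] at hlim
  refine squeeze_zero' (Eventually.of_forall fun n => ENNReal.toReal_nonneg) ?_ hlim
  filter_upwards [eventually_ge_atTop 2, (tendsto_log_div_natCast_nhds_zero.const_mul
    (1 + ε)).eventually (ge_mem_nhds (show (1 + ε) * 0 < 1 by simp))] with n hn hsmall
  have := hprob n
  have hbound := toReal_measure_lt_abs_inv_mul_maxSpacing_sub_one_le (by omega) (hmeas n hn)
    (hindep n hn) (hunif n hn) hε0 hε1
    (div_pos (log_pos (by exact_mod_cast hn)) (by positivity)) hsmall
  rwa [inv_div] at hbound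
end

section
/- For every positive integer m, the sequence μ_m defined by μ_m = ∑_{(r_1,…,r_m): r_1+2r_2+…+m·r_m=m, r_i ≥ 0} m!/(r_1!·1^{r_1} ⋯ r_m!·m^{r_m}) · γ^{r_1} ζ(2)^{r_2} ⋯ ζ(m)^{r_m} satisfies the bound μ_{2m} ≤ exp(2√(ζ(2))·√(2m)) · (2m)! · 2^{2m}; in particular, the sequence (μ_{2m}^{1/(2m)}/(2m))_{m≥1} is bounded. -/
open Finset

/-- `ζ(r) = ∑_{j≥1} 1/j^r`, the Riemann zeta value at a natural number `r`. -/
noncomputable def zetaNat (r : ℕ) : ℝ := ∑' j : ℕ, 1 / ((j : ℝ) + 1) ^ r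

lemma summable_zeta_aux {p : ℕ} (hp : 2 ≤ p) :
    Summable (fun j : ℕ => 1 / ((j : ℝ) + 1) ^ p) := by
  have h := (summable_nat_add_iff 1).mpr
    (Real.summable_one_div_nat_pow.mpr (by omega : 1 < p))
  refine h.congr fun j => ?_
  push_cast
  ring_nf

lemma zetaNat_nonneg (r : ℕ) : 0 ≤ zetaNat r :=
  tsum_nonneg fun j => by positivity

lemma one_le_zetaNat_two : 1 ≤ zetaNat 2 := by
  have h := summable_zeta_aux (le_refl 2)
  have := Summable.le_tsum h 0 (fun j _ => by positivity)
  simpa [zetaNat, one_div] using this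

lemma zetaNat_two_eq : zetaNat 2 = Real.pi ^ 2 / 6 := by
  have h := hasSum_zeta_two
  have h2 : HasSum (fun j : ℕ => (1 : ℝ) / ((j : ℝ) + 1) ^ 2)
      (Real.pi ^ 2 / 6 - ∑ i ∈ range 1, (1 : ℝ) / (i : ℝ) ^ 2) := by
    refine ((hasSum_nat_add_iff' 1).mpr h).congr_fun fun j => ?_
    push_cast; ring_nf
  simpa [zetaNat] using h2.tsum_eq

lemma zetaNat_two_le : zetaNat 2 ≤ 2 := by
  rw [zetaNat_two_eq]
  nlinarith [Real.pi_lt_d2, Real.pi_pos]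

lemma zetaNat_le_zetaNat_two {r : ℕ} (hr : 2 ≤ r) : zetaNat r ≤ zetaNat 2 := by
  refine Summable.tsum_le_tsum (fun j => ?_) (summable_zeta_aux hr) (summable_zeta_aux le_rfl)
  have h1 : (1 : ℝ) ≤ (j : ℝ) + 1 := by { have : (0:ℝ) ≤ j := Nat.cast_nonneg j; linarith }
  exact one_div_le_one_div_of_le (by positivity) (pow_le_pow_right₀ h1 hr)

/-- `μ_m = ∑_{r_1+2r_2+⋯+m r_m = m} m!/(r_1! 1^{r_1} ⋯ r_m! m^{r_m})
γ^{r_1} ζ(2)^{r_2} ⋯ ζ(m)^{r_m}`, the `m`-th moment of the standard Gumbel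
distribution; any such tuple has entries `≤ m`, so restricting each entry to
`Finset.range (m+1)` loses nothing. -/
noncomputable def gumbelMoment (m : ℕ) : ℝ :=
  ∑ r ∈ (Fintype.piFinset fun _ : Fin m => Finset.range (m + 1)).filter
      (fun r => ∑ i : Fin m, ((i : ℕ) + 1) * r i = m),
    ((m.factorial : ℝ) /
        ∏ i : Fin m, (((r i).factorial : ℝ) * ((i : ℕ) + 1) ^ (r i))) *
      ∏ i : Fin m,
        (if (i : ℕ) = 0 then Real.eulerMascheroniConstant
          else zetaNat ((i : ℕ) + 1)) ^ (r i)

lemma xval_mem (n : ℕ) (i : Fin n) :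
    0 ≤ (if (i : ℕ) = 0 then Real.eulerMascheroniConstant else zetaNat ((i : ℕ) + 1)) ∧
      (if (i : ℕ) = 0 then Real.eulerMascheroniConstant else zetaNat ((i : ℕ) + 1)) ≤ 2 := by
  split_ifs with h
  · constructor
    · linarith [Real.one_half_lt_eulerMascheroniConstant]
    · linarith [Real.eulerMascheroniConstant_lt_two_thirds]
  · exact ⟨zetaNat_nonneg _, le_trans (zetaNat_le_zetaNat_two (by omega)) zetaNat_two_le⟩

lemma gumbelMoment_nonneg (n : ℕ) : 0 ≤ gumbelMoment n := by
  refine Finset.sum_nonneg fun r _ => mul_nonneg ?_ ?_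
  · refine div_nonneg (by positivity) (Finset.prod_nonneg fun i _ => by positivity)
  · exact Finset.prod_nonneg fun i _ => pow_nonneg (xval_mem n i).1 _

lemma gumbelMoment_le (n : ℕ) :
    gumbelMoment n ≤ Real.exp 2 * n.factorial * 2 ^ n := by
  classical
  set c : Fin n → ℝ := fun i => (1 / 2 : ℝ) ^ (i : ℕ) / ((i : ℕ) + 1) with hc
  have hcnn : ∀ i, 0 ≤ c i := fun i => by positivity
  set K : ℝ := (n.factorial : ℝ) * 2 ^ n with hK
  have hKnn : 0 ≤ K := by positivity
  have step1 : gumbelMoment n ≤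
      ∑ r ∈ (Fintype.piFinset fun _ : Fin n => Finset.range (n + 1)).filter
          (fun r => ∑ i : Fin n, ((i : ℕ) + 1) * r i = n),
        K * ∏ i : Fin n, c i ^ (r i) / ((r i).factorial : ℝ) := by
    unfold gumbelMoment
    refine Finset.sum_le_sum fun r hr => ?_
    have hrc : ∑ i : Fin n, ((i : ℕ) + 1) * r i = n := (Finset.mem_filter.mp hr).2
    have hdenpos : (0 : ℝ) < ∏ i : Fin n, (((r i).factorial : ℝ) * ((i : ℕ) + 1) ^ (r i)) :=
      Finset.prod_pos fun i _ => by positivity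
    have hx : ∏ i : Fin n,
        (if (i : ℕ) = 0 then Real.eulerMascheroniConstant else zetaNat ((i : ℕ) + 1)) ^ (r i)
        ≤ ∏ i : Fin n, (2 : ℝ) ^ (r i) := by
      refine Finset.prod_le_prod (fun i _ => pow_nonneg (xval_mem n i).1 _)
        (fun i _ => pow_le_pow_left₀ (xval_mem n i).1 (xval_mem n i).2 _)
    have key : ∀ i : Fin n,
        (2 : ℝ) ^ (r i) / (((r i).factorial : ℝ) * ((i : ℕ) + 1) ^ (r i)) =
          c i ^ (r i) / ((r i).factorial : ℝ) * 2 ^ (((i : ℕ) + 1) * r i) := by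
      intro i
      have ha : (0 : ℝ) < ((i : ℕ) : ℝ) + 1 := by positivity
      have h0 : ((1 : ℝ) / 2) ^ (i : ℕ) * 2 ^ ((i : ℕ) + 1) = 2 := by
        rw [div_pow, one_pow, pow_succ]
        field_simp
      have h1 : c i * 2 ^ ((i : ℕ) + 1) = 2 / (((i : ℕ) : ℝ) + 1) := by
        show ((1 / 2 : ℝ) ^ (i : ℕ) / (((i : ℕ) : ℝ) + 1)) * 2 ^ ((i : ℕ) + 1) = _
        rw [div_mul_eq_mul_div, h0]
      have h2 : c i ^ (r i) * 2 ^ (((i : ℕ) + 1) * r i) =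
          2 ^ (r i) / (((i : ℕ) : ℝ) + 1) ^ (r i) := by
        rw [pow_mul, ← mul_pow, h1, div_pow]
      calc (2 : ℝ) ^ (r i) / (((r i).factorial : ℝ) * (((i : ℕ) : ℝ) + 1) ^ (r i))
          = ((2 : ℝ) ^ (r i) / (((i : ℕ) : ℝ) + 1) ^ (r i)) / ((r i).factorial : ℝ) := by
            rw [div_div, mul_comm]
        _ = (c i ^ (r i) * 2 ^ (((i : ℕ) + 1) * r i)) / ((r i).factorial : ℝ) := by rw [h2]
        _ = c i ^ (r i) / ((r i).factorial : ℝ) * 2 ^ (((i : ℕ) + 1) * r i) := by ring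
    have prodkey : ∏ i : Fin n,
        ((2 : ℝ) ^ (r i) / (((r i).factorial : ℝ) * ((i : ℕ) + 1) ^ (r i))) =
          2 ^ n * ∏ i : Fin n, c i ^ (r i) / ((r i).factorial : ℝ) := by
      rw [Finset.prod_congr rfl (fun i _ => key i), Finset.prod_mul_distrib,
        Finset.prod_pow_eq_pow_sum, hrc]
      ring
    calc ((n.factorial : ℝ) /
            ∏ i : Fin n, (((r i).factorial : ℝ) * ((i : ℕ) + 1) ^ (r i))) *
          ∏ i : Fin n,
            (if (i : ℕ) = 0 then Real.eulerMascheroniConstant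
              else zetaNat ((i : ℕ) + 1)) ^ (r i)
        ≤ ((n.factorial : ℝ) /
            ∏ i : Fin n, (((r i).factorial : ℝ) * ((i : ℕ) + 1) ^ (r i))) *
          ∏ i : Fin n, (2 : ℝ) ^ (r i) := by
          exact mul_le_mul_of_nonneg_left hx (div_nonneg (by positivity) hdenpos.le)
      _ = (n.factorial : ℝ) *
          ∏ i : Fin n, ((2 : ℝ) ^ (r i) / (((r i).factorial : ℝ) * ((i : ℕ) + 1) ^ (r i))) := by
          rw [Finset.prod_div_distrib, div_mul_eq_mul_div, mul_div_assoc]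
      _ = K * ∏ i : Fin n, c i ^ (r i) / ((r i).factorial : ℝ) := by
          rw [prodkey, hK]; ring
  calc gumbelMoment n
      ≤ ∑ r ∈ (Fintype.piFinset fun _ : Fin n => Finset.range (n + 1)).filter
          (fun r => ∑ i : Fin n, ((i : ℕ) + 1) * r i = n),
        K * ∏ i : Fin n, c i ^ (r i) / ((r i).factorial : ℝ) := step1
    _ ≤ ∑ r ∈ Fintype.piFinset fun _ : Fin n => Finset.range (n + 1),
        K * ∏ i : Fin n, c i ^ (r i) / ((r i).factorial : ℝ) := by
        refine Finset.sum_le_sum_of_subset_of_nonneg (Finset.filter_subset _ _)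
          (fun r _ _ => mul_nonneg hKnn (Finset.prod_nonneg fun i _ => by positivity))
    _ = K * ∑ r ∈ Fintype.piFinset fun _ : Fin n => Finset.range (n + 1),
        ∏ i : Fin n, c i ^ (r i) / ((r i).factorial : ℝ) := by rw [Finset.mul_sum]
    _ = K * ∏ i : Fin n, ∑ k ∈ Finset.range (n + 1), c i ^ k / (k.factorial : ℝ) := by
        rw [Finset.prod_univ_sum]
    _ ≤ K * ∏ i : Fin n, Real.exp (c i) := by
        refine mul_le_mul_of_nonneg_left
          (Finset.prod_le_prod (fun i _ => Finset.sum_nonneg fun k _ => by positivity)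
            (fun i _ => Real.sum_le_exp_of_nonneg (hcnn i) (n + 1))) hKnn
    _ = K * Real.exp (∑ i : Fin n, c i) := by rw [Real.exp_sum]
    _ ≤ K * Real.exp 2 := by
        refine mul_le_mul_of_nonneg_left (Real.exp_le_exp.mpr ?_) hKnn
        calc ∑ i : Fin n, c i ≤ ∑ i : Fin n, (1 / 2 : ℝ) ^ (i : ℕ) := by
              refine Finset.sum_le_sum fun i _ => ?_
              have h0 : (0 : ℝ) ≤ ((i : ℕ) : ℝ) := Nat.cast_nonneg _
              exact div_le_self (by positivity) (by linarith)
          _ = ∑ i ∈ Finset.range n, (1 / 2 : ℝ) ^ i := Fin.sum_univ_eq_sum_range _ n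
          _ ≤ 2 := sum_geometric_two_le n
    _ = Real.exp 2 * (n.factorial : ℝ) * 2 ^ n := by rw [hK]; ring

/-- **Moment growth bound.** For every positive integer `m`,
`μ_{2m} ≤ exp(2√(ζ(2)) √(2m)) (2m)! 2^{2m}`; in particular the sequence
`(μ_{2m}^{1/(2m)}/(2m))_{m ≥ 1}` is bounded. -/
theorem gumbelMoment_even_le_and_bounded :
    (∀ m : ℕ, 0 < m →
      gumbelMoment (2 * m) ≤
        Real.exp (2 * Real.sqrt (zetaNat 2) * Real.sqrt (2 * m)) *
          ((2 * m).factorial : ℝ) * 2 ^ (2 * m)) ∧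
    ∃ C : ℝ, ∀ m : ℕ, 0 < m →
      |gumbelMoment (2 * m) ^ ((1 : ℝ) / (2 * m)) / (2 * m)| ≤ C := by
  have main : ∀ m : ℕ, 0 < m →
      gumbelMoment (2 * m) ≤ Real.exp (2 * Real.sqrt (zetaNat 2) * Real.sqrt (2 * m)) *
        ((2 * m).factorial : ℝ) * 2 ^ (2 * m) := by
    intro m hm
    refine (gumbelMoment_le (2 * m)).trans ?_
    have h1 : (1 : ℝ) ≤ Real.sqrt (zetaNat 2) := by
      rw [show (1 : ℝ) = Real.sqrt 1 by rw [Real.sqrt_one]]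
      exact Real.sqrt_le_sqrt one_le_zetaNat_two
    have h2 : (1 : ℝ) ≤ Real.sqrt (2 * m) := by
      rw [show (1 : ℝ) = Real.sqrt 1 by rw [Real.sqrt_one]]
      refine Real.sqrt_le_sqrt ?_
      have : (1 : ℝ) ≤ (m : ℝ) := by exact_mod_cast hm
      linarith
    have h3 : (2 : ℝ) ≤ 2 * Real.sqrt (zetaNat 2) * Real.sqrt (2 * m) := by nlinarith
    have hee := Real.exp_le_exp.mpr h3
    have hfac : (0 : ℝ) ≤ ((2 * m).factorial : ℝ) := by positivity
    exact mul_le_mul_of_nonneg_right (mul_le_mul_of_nonneg_right hee hfac) (by positivity)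
  refine ⟨main, ⟨2 * Real.exp 1, ?_⟩⟩
  intro m hm
  set n := 2 * m with hn
  have hn0 : 0 < n := by omega
  have hnR : (0 : ℝ) < (n : ℝ) := by exact_mod_cast hn0
  have hmu0 := gumbelMoment_nonneg n
  set b : ℝ := Real.exp 1 * n * 2 with hb
  have hb0 : (0 : ℝ) ≤ b := by positivity
  have hbig : gumbelMoment n ≤ b ^ n := by
    refine (gumbelMoment_le n).trans ?_
    have e2 : Real.exp 2 ≤ Real.exp 1 ^ n := by
      rw [Real.exp_one_pow]
      exact Real.exp_le_exp.mpr (by exact_mod_cast (show 2 ≤ n by omega))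
    have fac : ((n.factorial : ℝ)) ≤ (n : ℝ) ^ n := by
      exact_mod_cast Nat.factorial_le_pow n
    calc Real.exp 2 * n.factorial * 2 ^ n ≤ Real.exp 1 ^ n * (n : ℝ) ^ n * 2 ^ n := by
          exact mul_le_mul (mul_le_mul e2 fac (by positivity) (by positivity)) le_rfl
            (by positivity) (by positivity)
      _ = b ^ n := by rw [hb, mul_pow, mul_pow]
  have hpow : gumbelMoment n ^ ((1 : ℝ) / n) ≤ b := by
    have h := Real.rpow_le_rpow hmu0 hbig (by positivity : (0 : ℝ) ≤ (1 : ℝ) / n)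
    refine h.trans_eq ?_
    rw [← Real.rpow_natCast b n, ← Real.rpow_mul hb0, mul_one_div, div_self (ne_of_gt hnR),
      Real.rpow_one]
  have hcast : ((2 : ℝ) * m) = (n : ℝ) := by rw [hn]; push_cast; ring
  rw [hcast, abs_of_nonneg (div_nonneg (Real.rpow_nonneg hmu0 _) hnR.le)]
  calc gumbelMoment n ^ ((1 : ℝ) / n) / n ≤ b / n := by gcongr
    _ = 2 * Real.exp 1 := by
        rw [hb]
        field_simp
end
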